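/- arXiv:2305.04983 — 5 statements merged into one kernel-verified Lean document; each statement's English description precedes it below -/
import Mathlib

section
/- Let F be a field, S ⊆ F a finite set with |S| = s ≥ 2, d ≥ 0, t = s³, and K = t(d+1). Suppose g : S^n → F has junta-degree at most d (with respect to the additive group of F) but is not degree-d. For a map μ : {1,…,n} → {1,…,K}, define g'_μ : B(S,t)^{K/t} → F by g'_μ(y) = g(y_{μ(1)},…,y_{μ(n)}) (viewing y as a point of S^K by flattening). Then the number of maps μ ∈ {1,…,K}^{{1,…,n}} for which g'_μ is not degree-d is at least K^{n−d}; equivalently, a uniformly random μ yields a non-degree-d restriction with probability at least K^{−d}. -/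
open scoped Classical

/-- A function `f` on a finite product domain `∀ i, D i` with values in an additive
abelian group `G` has junta-degree at most `d` if it is a finite sum of functions,
each depending on at most `d` of the coordinates. -/
def JuntaDegLE {n : ℕ} {D : Fin n → Type*} {G : Type*} [AddCommGroup G]
    (d : ℕ) (f : (∀ i, D i) → G) : Prop :=
  ∃ (t : ℕ) (Ds : Fin t → Finset (Fin n)) (fs : Fin t → (∀ i, D i) → G),
    (∀ j, (Ds j).card ≤ d) ∧
    (∀ j (x y : ∀ i, D i), (∀ i ∈ Ds j, x i = y i) → fs j x = fs j y) ∧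
    ∀ x, f x = ∑ j, fs j x

/-- `z ∈ S^t` is a balanced tuple if it contains each element of `S` exactly
`t / |S|` times. -/
def IsBalancedTuple {F : Type*} [DecidableEq F] (S : Finset F) (t : ℕ)
    (z : Fin t → F) : Prop :=
  (∀ i, z i ∈ S) ∧
  ∀ a ∈ S, (Finset.univ.filter (fun i => z i = a)).card = t / S.card

set_option linter.unusedSectionVars false
set_option maxHeartbeats 1000000

namespace Stmt13
open MvPolynomial

section Dem
variable {F : Type*} [Field F] {σ : Type*} [DecidableEq σ]

omit [DecidableEq σ] in
lemma geom_identity (a b : σ) (m : ℕ) :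
    (X a - X b : MvPolynomial σ F) * (∑ i ∈ Finset.range m, X a ^ i * X b ^ (m - 1 - i)) =
      X a ^ m - X b ^ m := by
  rw [mul_comm]; exact geom_sum₂_mul (X a) (X b) m

omit [DecidableEq σ] in
lemma sum_geom_deg (a b : σ) (m : ℕ) :
    (∑ i ∈ Finset.range m, (X a : MvPolynomial σ F) ^ i * X b ^ (m - 1 - i)).totalDegree ≤ m - 1 := by
  refine le_trans (totalDegree_finset_sum _ _) ?_
  refine Finset.sup_le fun i hi => ?_
  refine le_trans (totalDegree_mul _ _) ?_
  simp only [totalDegree_X_pow]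
  have : i ≤ m - 1 := Nat.le_sub_one_of_lt (Finset.mem_range.mp hi)
  omega

omit [DecidableEq σ] in
lemma swapPow_exists (a b : σ) (p q : ℕ) :
    ∃ w : MvPolynomial σ F, (X a - X b) * w = X a ^ q * X b ^ p - X a ^ p * X b ^ q ∧
      (w = 0 ∨ w.totalDegree + 1 ≤ p + q) := by
  rcases le_or_gt p q with h | h
  · rcases Nat.exists_eq_add_of_le h with ⟨m, rfl⟩
    rcases Nat.eq_zero_or_pos m with rfl | hm
    · exact ⟨0, by ring_nf, Or.inl rfl⟩
    · refine ⟨X a ^ p * X b ^ p * (∑ i ∈ Finset.range m, X a ^ i * X b ^ (m - 1 - i)), ?_, ?_⟩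
      · have key := geom_identity (F := F) a b m
        linear_combination (X a ^ p * X b ^ p : MvPolynomial σ F) * key
      · right
        have h1 : ((X a : MvPolynomial σ F) ^ p * X b ^ p).totalDegree ≤ p + p := by
          refine le_trans (totalDegree_mul _ _) ?_; simp [totalDegree_X_pow]
        have := sum_geom_deg (F := F) a b m
        have h2 := le_trans (totalDegree_mul (X a ^ p * X b ^ p)
          (∑ i ∈ Finset.range m, (X a : MvPolynomial σ F) ^ i * X b ^ (m - 1 - i))) (add_le_add h1 this)
        omega
  · rcases Nat.exists_eq_add_of_le h.le with ⟨m, rfl⟩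
    have hm : 0 < m := by omega
    refine ⟨-(X a ^ q * X b ^ q * (∑ i ∈ Finset.range m, X a ^ i * X b ^ (m - 1 - i))), ?_, ?_⟩
    · have key := geom_identity (F := F) a b m
      linear_combination (-(X a ^ q * X b ^ q) : MvPolynomial σ F) * key
    · right
      rw [totalDegree_neg]
      have h1 : ((X a : MvPolynomial σ F) ^ q * X b ^ q).totalDegree ≤ q + q := by
        refine le_trans (totalDegree_mul _ _) ?_; simp [totalDegree_X_pow]
      have := sum_geom_deg (F := F) a b m
      have h2 := le_trans (totalDegree_mul (X a ^ q * X b ^ q)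
        (∑ i ∈ Finset.range m, (X a : MvPolynomial σ F) ^ i * X b ^ (m - 1 - i))) (add_le_add h1 this)
      omega

lemma finsupp_decomp (a b : σ) (hab : a ≠ b) (α : σ →₀ ℕ) :
    (((α.erase a).erase b) + Finsupp.single a (α a)) + Finsupp.single b (α b) = α := by
  ext i
  by_cases hia : i = a
  · subst hia
    simp [Finsupp.single_apply, hab, Ne.symm hab, Finsupp.erase_ne, Finsupp.erase_same]
  · by_cases hib : i = b
    · subst hib
      simp [Finsupp.single_apply, hab, Ne.symm hab, Finsupp.erase_same]
    · simp [Finsupp.single_apply, Finsupp.erase_ne, hia, hib, Ne.symm hia, Ne.symm hib]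

lemma monomial_decomp (a b : σ) (hab : a ≠ b) (α : σ →₀ ℕ) (c : F) :
    monomial α c = monomial ((α.erase a).erase b) c * X a ^ (α a) * X b ^ (α b) := by
  rw [show (X a : MvPolynomial σ F) ^ (α a) = monomial (Finsupp.single a (α a)) 1 from by
        rw [← C_mul_X_pow_eq_monomial]; simp,
      show (X b : MvPolynomial σ F) ^ (α b) = monomial (Finsupp.single b (α b)) 1 from by
        rw [← C_mul_X_pow_eq_monomial]; simp]
  rw [monomial_mul, monomial_mul, mul_one, mul_one, finsupp_decomp a b hab α]

lemma mapDomain_swap (a b : σ) (hab : a ≠ b) (α : σ →₀ ℕ) :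
    Finsupp.mapDomain (Equiv.swap a b) α =
      (((α.erase a).erase b) + Finsupp.single a (α b)) + Finsupp.single b (α a) := by
  rw [← Finsupp.equivMapDomain_eq_mapDomain]
  ext i
  rw [Finsupp.equivMapDomain_apply, Equiv.symm_swap]
  by_cases hia : i = a
  · subst hia
    simp [Finsupp.single_apply, hab, Ne.symm hab, Finsupp.erase_ne, Finsupp.erase_same,
      Equiv.swap_apply_left]
  · by_cases hib : i = b
    · subst hib
      simp [Finsupp.single_apply, hab, Ne.symm hab, Finsupp.erase_same, Equiv.swap_apply_right]
    · simp [Finsupp.single_apply, Finsupp.erase_ne, hia, hib, Ne.symm hia, Ne.symm hib,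
        Equiv.swap_apply_of_ne_of_ne hia hib]


lemma rename_swap_monomial (a b : σ) (hab : a ≠ b) (α : σ →₀ ℕ) (c : F) :
    rename (Equiv.swap a b) (monomial α c) =
      monomial ((α.erase a).erase b) c * X a ^ (α b) * X b ^ (α a) := by
  rw [rename_monomial, mapDomain_swap a b hab α]
  rw [show (X a : MvPolynomial σ F) ^ (α b) = monomial (Finsupp.single a (α b)) 1 from by
        rw [← C_mul_X_pow_eq_monomial]; simp,
      show (X b : MvPolynomial σ F) ^ (α a) = monomial (Finsupp.single b (α a)) 1 from by
        rw [← C_mul_X_pow_eq_monomial]; simp]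
  rw [monomial_mul, monomial_mul, mul_one, mul_one]

lemma sum_decomp (a b : σ) (hab : a ≠ b) (α : σ →₀ ℕ) :
    (((α.erase a).erase b).sum fun _ e => e) + α a + α b = α.sum fun _ e => e := by
  conv_rhs => rw [← finsupp_decomp a b hab α]
  rw [Finsupp.sum_add_index' (fun _ => rfl) (fun _ _ _ => rfl),
      Finsupp.sum_add_index' (fun _ => rfl) (fun _ _ _ => rfl),
      Finsupp.sum_single_index rfl, Finsupp.sum_single_index rfl]

lemma dem_exists (a b : σ) (hab : a ≠ b) (f : MvPolynomial σ F) :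
    ∃ q : MvPolynomial σ F, (X a - X b) * q = rename (Equiv.swap a b) f - f ∧
      (q = 0 ∨ q.totalDegree + 1 ≤ f.totalDegree) := by
  choose w hw hwdeg using fun α : σ →₀ ℕ => swapPow_exists (F := F) a b (α a) (α b)
  refine ⟨∑ α ∈ f.support, monomial ((α.erase a).erase b) (coeff α f) * w α, ?_, ?_⟩
  · rw [Finset.mul_sum]
    conv_rhs => rw [← support_sum_monomial_coeff f]
    rw [map_sum, ← Finset.sum_sub_distrib]
    refine Finset.sum_congr rfl fun α hα => ?_
    rw [show (X a - X b) * (monomial ((α.erase a).erase b) (coeff α f) * w α)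
        = monomial ((α.erase a).erase b) (coeff α f) * ((X a - X b) * w α) from by ring, hw α]
    rw [rename_swap_monomial a b hab]
    conv_rhs => rw [monomial_decomp a b hab α (coeff α f)]
    ring
  · by_cases hall : ∀ α ∈ f.support, monomial ((α.erase a).erase b) (coeff α f) * w α = 0
    · left; exact Finset.sum_eq_zero hall
    · right
      push_neg at hall
      obtain ⟨α₀, hα₀, hne₀⟩ := hall
      have hterm : ∀ α ∈ f.support,
          (monomial ((α.erase a).erase b) (coeff α f) * w α).totalDegree + 1 ≤ f.totalDegree ∨
          monomial ((α.erase a).erase b) (coeff α f) * w α = 0 := by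
        intro α hα
        rcases hwdeg α with h0 | hdeg
        · right; rw [h0, mul_zero]
        · left
          have hα' : (α.sum fun _ e => e) ≤ f.totalDegree := le_totalDegree hα
          have hc : coeff α f ≠ 0 := mem_support_iff.mp hα
          have hmono : (monomial ((α.erase a).erase b) (coeff α f)).totalDegree
              = ((α.erase a).erase b).sum fun _ e => e := totalDegree_monomial _ hc
          have hdec := sum_decomp a b hab α
          have hmul := totalDegree_mul (monomial ((α.erase a).erase b) (coeff α f)) (w α)
          omega
      have hD1 : 1 ≤ f.totalDegree := by
        rcases hterm α₀ hα₀ with h | h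
        · omega
        · exact absurd h hne₀
      have hsum := totalDegree_finset_sum f.support
        (fun α => monomial ((α.erase a).erase b) (coeff α f) * w α)
      have hsup : (f.support.sup fun α => (monomial ((α.erase a).erase b) (coeff α f) * w α).totalDegree)
          ≤ f.totalDegree - 1 := by
        refine Finset.sup_le fun α hα => ?_
        rcases hterm α hα with h | h
        · omega
        · rw [h]; simp
      omega

noncomputable def dem (a b : σ) (f : MvPolynomial σ F) : MvPolynomial σ F :=
  if h : a ≠ b then Classical.choose (dem_exists a b h f) else 0

lemma X_sub_X_ne_zero (a b : σ) (hab : a ≠ b) : (X a - X b : MvPolynomial σ F) ≠ 0 := by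
  intro h
  have := sub_eq_zero.mp h
  exact hab (X_injective.eq_iff.mp this)

lemma dem_spec (a b : σ) (hab : a ≠ b) (f : MvPolynomial σ F) :
    (X a - X b) * dem a b f = rename (Equiv.swap a b) f - f := by
  rw [dem, dif_pos hab]
  exact (Classical.choose_spec (dem_exists a b hab f)).1

lemma dem_deg (a b : σ) (hab : a ≠ b) (f : MvPolynomial σ F) :
    dem a b f = 0 ∨ (dem a b f).totalDegree + 1 ≤ f.totalDegree := by
  rw [dem, dif_pos hab]
  exact (Classical.choose_spec (dem_exists a b hab f)).2

lemma dem_cancel (a b : σ) (hab : a ≠ b) (f q : MvPolynomial σ F)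
    (h : (X a - X b) * q = rename (Equiv.swap a b) f - f) : q = dem a b f :=
  mul_left_cancel₀ (X_sub_X_ne_zero a b hab) (h.trans (dem_spec a b hab f).symm)

lemma dem_zero (a b : σ) (hab : a ≠ b) : dem a b (0 : MvPolynomial σ F) = 0 :=
  (dem_cancel a b hab 0 0 (by simp only [map_zero, sub_zero, mul_zero])).symm

lemma dem_add (a b : σ) (hab : a ≠ b) (f g : MvPolynomial σ F) :
    dem a b (f + g) = dem a b f + dem a b g :=
  (dem_cancel a b hab (f + g) _ (by rw [mul_add, dem_spec a b hab f, dem_spec a b hab g, map_add]; ring)).symm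

lemma dem_neg (a b : σ) (hab : a ≠ b) (f : MvPolynomial σ F) :
    dem a b (-f) = -dem a b f :=
  (dem_cancel a b hab (-f) _ (by rw [mul_neg, dem_spec a b hab f, map_neg]; ring)).symm

lemma dem_sub (a b : σ) (hab : a ≠ b) (f g : MvPolynomial σ F) :
    dem a b (f - g) = dem a b f - dem a b g := by
  rw [sub_eq_add_neg, dem_add a b hab, dem_neg a b hab, sub_eq_add_neg]

lemma dem_sum (a b : σ) (hab : a ≠ b) {ι : Type*} (s : Finset ι) (f : ι → MvPolynomial σ F) :
    dem a b (∑ i ∈ s, f i) = ∑ i ∈ s, dem a b (f i) := by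
  classical
  induction s using Finset.induction_on with
  | empty => simp [dem_zero a b hab]
  | insert x s' hx ih =>
                    rw [Finset.sum_insert hx, Finset.sum_insert hx, dem_add a b hab, ih]

lemma dem_mul_inv (a b : σ) (hab : a ≠ b) (g f : MvPolynomial σ F)
    (hg : rename (Equiv.swap a b) g = g) : dem a b (g * f) = g * dem a b f :=
  (dem_cancel a b hab (g * f) _ (by
    rw [show (X a - X b) * (g * dem a b f) = g * ((X a - X b) * dem a b f) from by ring,
      dem_spec a b hab f, map_mul, hg]; ring)).symm

lemma swap_comp_swap (a b a' b' : σ) (h : a' ≠ a) (h2 : a' ≠ b) (h3 : b' ≠ a) (h4 : b' ≠ b) :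
    (Equiv.swap a' b' : σ → σ) ∘ (Equiv.swap a b) = (Equiv.swap a b : σ → σ) ∘ (Equiv.swap a' b') := by
  funext x
  simp only [Function.comp_apply, Equiv.swap_apply_def]
  split_ifs <;> simp_all

lemma dem_rename_comm (a b a' b' : σ) (hab : a ≠ b) (h : a' ≠ a) (h2 : a' ≠ b) (h3 : b' ≠ a) (h4 : b' ≠ b)
    (f : MvPolynomial σ F) :
    rename (Equiv.swap a' b') (dem a b f) = dem a b (rename (Equiv.swap a' b') f) := by
  refine dem_cancel a b hab _ _ ?_
  have hXa : rename (Equiv.swap a' b') (X a : MvPolynomial σ F) = X a := by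
    rw [rename_X, Equiv.swap_apply_of_ne_of_ne (Ne.symm h) (Ne.symm h3)]
  have hXb : rename (Equiv.swap a' b') (X b : MvPolynomial σ F) = X b := by
    rw [rename_X, Equiv.swap_apply_of_ne_of_ne (Ne.symm h2) (Ne.symm h4)]
  calc (X a - X b) * rename (Equiv.swap a' b') (dem a b f)
      = rename (Equiv.swap a' b') ((X a - X b) * dem a b f) := by
        rw [map_mul, map_sub, hXa, hXb]
    _ = rename (Equiv.swap a' b') (rename (Equiv.swap a b) f - f) := by rw [dem_spec a b hab f]
    _ = rename (Equiv.swap a b) (rename (Equiv.swap a' b') f) - rename (Equiv.swap a' b') f := by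
        rw [map_sub, rename_rename, rename_rename, swap_comp_swap a b a' b' h h2 h3 h4]

lemma dem_eval (a b : σ) (hab : a ≠ b) (f : MvPolynomial σ F) (φ : σ → F) :
    (φ a - φ b) * eval φ (dem a b f) = eval (φ ∘ (Equiv.swap a b)) f - eval φ f := by
  have := congrArg (eval φ) (dem_spec a b hab f)
  rw [map_mul, map_sub, eval_X, eval_X, map_sub, eval_rename] at this
  exact this

-- demList
noncomputable def demList (l : List (σ × σ)) (f : MvPolynomial σ F) : MvPolynomial σ F :=
  l.foldl (fun g p => dem p.1 p.2 g) f

@[simp] lemma demList_nil (f : MvPolynomial σ F) : demList [] f = f := rfl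
lemma demList_cons (p : σ × σ) (l : List (σ × σ)) (f : MvPolynomial σ F) :
    demList (p :: l) f = demList l (dem p.1 p.2 f) := rfl

lemma demList_zero (l : List (σ × σ)) (hl : ∀ p ∈ l, p.1 ≠ p.2) :
    demList l (0 : MvPolynomial σ F) = 0 := by
  induction l with
  | nil => rfl
  | cons p l ih =>
      rw [demList_cons, dem_zero p.1 p.2 (hl p (List.mem_cons_self))]
      exact ih fun q hq => hl q (List.mem_cons_of_mem p hq)

lemma demList_add (l : List (σ × σ)) (hl : ∀ p ∈ l, p.1 ≠ p.2) (f g : MvPolynomial σ F) :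
    demList l (f + g) = demList l f + demList l g := by
  induction l generalizing f g with
  | nil => rfl
  | cons p l ih =>
      rw [demList_cons, dem_add p.1 p.2 (hl p (List.mem_cons_self))]
      rw [ih fun q hq => hl q (List.mem_cons_of_mem p hq)]
      rfl

lemma demList_neg (l : List (σ × σ)) (hl : ∀ p ∈ l, p.1 ≠ p.2) (f : MvPolynomial σ F) :
    demList l (-f) = -demList l f := by
  induction l generalizing f with
  | nil => rfl
  | cons p l ih =>
      rw [demList_cons, dem_neg p.1 p.2 (hl p (List.mem_cons_self))]
      rw [ih fun q hq => hl q (List.mem_cons_of_mem p hq)]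
      rfl

lemma demList_sub (l : List (σ × σ)) (hl : ∀ p ∈ l, p.1 ≠ p.2) (f g : MvPolynomial σ F) :
    demList l (f - g) = demList l f - demList l g := by
  rw [sub_eq_add_neg, demList_add l hl, demList_neg l hl, sub_eq_add_neg]

lemma demList_sum (l : List (σ × σ)) (hl : ∀ p ∈ l, p.1 ≠ p.2) {ι : Type*} (s : Finset ι)
    (f : ι → MvPolynomial σ F) :
    demList l (∑ i ∈ s, f i) = ∑ i ∈ s, demList l (f i) := by
  classical
  induction s using Finset.induction_on with
  | empty => simp [demList_zero l hl]
  | insert x s' hx ih =>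
                    rw [Finset.sum_insert hx, Finset.sum_insert hx, demList_add l hl, ih]

lemma demList_mul_inv (l : List (σ × σ)) (hl : ∀ p ∈ l, p.1 ≠ p.2) (g f : MvPolynomial σ F)
    (hg : ∀ p ∈ l, rename (Equiv.swap p.1 p.2) g = g) :
    demList l (g * f) = g * demList l f := by
  induction l generalizing f with
  | nil => rfl
  | cons p l ih =>
      rw [demList_cons, dem_mul_inv p.1 p.2 (hl p (List.mem_cons_self)) g f
        (hg p (List.mem_cons_self)), demList_cons]
      exact ih (fun q hq => hl q (List.mem_cons_of_mem p hq)) _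
        (fun q hq => hg q (List.mem_cons_of_mem p hq))

lemma demList_deg (l : List (σ × σ)) (hl : ∀ p ∈ l, p.1 ≠ p.2) (f : MvPolynomial σ F) :
    demList l f = 0 ∨ (demList l f).totalDegree + l.length ≤ f.totalDegree := by
  induction l generalizing f with
  | nil => right; simp
  | cons p l ih =>
      rw [demList_cons]
      rcases dem_deg p.1 p.2 (hl p (List.mem_cons_self)) f with h0 | hd
      · rw [h0]
        left
        exact demList_zero l fun q hq => hl q (List.mem_cons_of_mem p hq)
      · rcases ih (fun q hq => hl q (List.mem_cons_of_mem p hq)) (dem p.1 p.2 f) with h0 | hd2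
        · left; exact h0
        · right; simp only [List.length_cons]; omega

lemma demList_rename_comm (l : List (σ × σ)) (hl : ∀ p ∈ l, p.1 ≠ p.2) (a' b' : σ)
    (hd : ∀ p ∈ l, a' ≠ p.1 ∧ a' ≠ p.2 ∧ b' ≠ p.1 ∧ b' ≠ p.2) (f : MvPolynomial σ F) :
    rename (Equiv.swap a' b') (demList l f) = demList l (rename (Equiv.swap a' b') f) := by
  induction l generalizing f with
  | nil => rfl
  | cons p l ih =>
      obtain ⟨h1, h2, h3, h4⟩ := hd p (List.mem_cons_self)
      rw [demList_cons, ih (fun q hq => hl q (List.mem_cons_of_mem p hq))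
        (fun q hq => hd q (List.mem_cons_of_mem p hq)),
        dem_rename_comm p.1 p.2 a' b' (hl p (List.mem_cons_self)) h1 h2 h3 h4, demList_cons]

-- one-step: dem of a pure power of the active variable
lemma dem_X_pow (a b : σ) (hab : a ≠ b) (e : ℕ) :
    dem a b ((X a : MvPolynomial σ F) ^ e) =
      -∑ i ∈ Finset.range e, X a ^ i * X b ^ (e - 1 - i) := by
  refine (dem_cancel a b hab _ _ ?_).symm
  rw [map_pow, rename_X, Equiv.swap_apply_left]
  have := geom_identity (F := F) a b e
  linear_combination (-1 : MvPolynomial σ F) * this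

def mkOps (a : σ) (pt : ℕ → σ) (k : ℕ) : List (σ × σ) :=
  (List.range k).map fun c => (a, pt c)

lemma mkOps_mem {a : σ} {pt : ℕ → σ} {k : ℕ} {p : σ × σ} (hp : p ∈ mkOps a pt k) :
    ∃ c < k, p = (a, pt c) := by
  simp only [mkOps, List.mem_map, List.mem_range] at hp
  obtain ⟨c, hc, rfl⟩ := hp
  exact ⟨c, hc, rfl⟩

lemma mkOps_succ (a : σ) (pt : ℕ → σ) (k : ℕ) :
    mkOps a pt (k+1) = (a, pt 0) :: mkOps a (fun c => pt (c+1)) k := by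
  simp only [mkOps, List.range_succ_eq_map, List.map_cons, List.map_map]
  rfl

/-- The key single-block computation. -/
lemma block_lemma (a : σ) : ∀ (k : ℕ) (pt : ℕ → σ), (∀ c < k, pt c ≠ a) →
    (∀ c < k, ∀ c' < k, c ≠ c' → pt c ≠ pt c') →
    ∀ e : ℕ, e ≤ k →
    demList (mkOps a pt k) ((X a : MvPolynomial σ F) ^ e) =
      if e = k then (-1 : MvPolynomial σ F) ^ k else 0 := by
  intro k
  induction k with
  | zero =>
      intro pt h1 h2 e he
      interval_cases e
      simp [mkOps]
  | succ k ih =>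
      intro pt h1 h2 e he
      have hba : pt 0 ≠ a := h1 0 (Nat.succ_pos k)
      have hab : a ≠ pt 0 := hba.symm
      rw [mkOps_succ, demList_cons]
      have hl' : ∀ p ∈ mkOps a (fun c => pt (c+1)) k, p.1 ≠ p.2 := by
        intro p hp
        obtain ⟨c, hc, rfl⟩ := mkOps_mem hp
        exact (h1 (c+1) (by omega)).symm
      rcases Nat.eq_zero_or_pos e with rfl | hepos
      · -- e = 0 : dem of 1 is 0
        have h1' : dem a (pt 0) ((X a : MvPolynomial σ F) ^ 0) = 0 := by
          refine (dem_cancel a (pt 0) hab _ _ ?_).symm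
          simp
        rw [h1', demList_zero _ hl']
        have : (0 : ℕ) ≠ k + 1 := by omega
        simp [this]
      · rw [dem_X_pow a (pt 0) hab e, demList_neg _ hl', demList_sum _ hl']
        have hterm : ∀ i ∈ Finset.range e,
            demList (mkOps a (fun c => pt (c+1)) k) ((X a : MvPolynomial σ F) ^ i * X (pt 0) ^ (e - 1 - i))
            = X (pt 0) ^ (e - 1 - i) * demList (mkOps a (fun c => pt (c+1)) k) ((X a : MvPolynomial σ F) ^ i) := by
          intro i hi
          rw [mul_comm]
          refine demList_mul_inv _ hl' _ _ ?_
          intro p hp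
          obtain ⟨c, hc, rfl⟩ := mkOps_mem hp
          rw [map_pow, rename_X, Equiv.swap_apply_of_ne_of_ne hba
            (h2 0 (Nat.succ_pos k) (c+1) (by omega) (by omega))]
        rw [Finset.sum_congr rfl hterm]
        have hih : ∀ i ∈ Finset.range e,
            X (pt 0) ^ (e - 1 - i) * demList (mkOps a (fun c => pt (c+1)) k) ((X a : MvPolynomial σ F) ^ i)
            = X (pt 0) ^ (e - 1 - i) * (if i = k then (-1 : MvPolynomial σ F) ^ k else 0) := by
          intro i hi
          rw [ih (fun c => pt (c+1)) (fun c hc => h1 (c+1) (by omega))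
            (fun c hc c' hc' hne => h2 (c+1) (by omega) (c'+1) (by omega) (by omega)) i
            (by have := Finset.mem_range.mp hi; omega)]
        rw [Finset.sum_congr rfl hih]
        by_cases hek : e = k + 1
        · subst hek
          have hx : ∀ x ∈ Finset.range (k+1),
              X (pt 0) ^ (k + 1 - 1 - x) * (if x = k then (-1 : MvPolynomial σ F) ^ k else 0)
              = if x = k then (-1 : MvPolynomial σ F) ^ k else 0 := by
            intro x hx
            by_cases hxk : x = k
            · subst hxk; simp
            · simp [hxk]
          rw [Finset.sum_congr rfl hx, Finset.sum_ite_eq' (Finset.range (k+1)) k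
            (fun _ => (-1 : MvPolynomial σ F) ^ k)]
          simp [pow_succ]
        · -- e ≤ k, so every i < e satisfies i < k, hence all terms 0
          have : ∀ i ∈ Finset.range e, X (pt 0) ^ (e - 1 - i) * (if i = k then (-1 : MvPolynomial σ F) ^ k else 0) = 0 := by
            intro i hi
            have : i ≠ k := by have := Finset.mem_range.mp hi; omega
            simp [this]
          rw [Finset.sum_eq_zero this]
          simp [hek]

lemma demList_append (l₁ l₂ : List (σ × σ)) (f : MvPolynomial σ F) :
    demList (l₁ ++ l₂) f = demList l₂ (demList l₁ f) := by
  simp [demList, List.foldl_append]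

section Master
variable {d t : ℕ}

lemma master (z0 : Fin t) (pt : Fin (d+1) → ℕ → Fin t) (k : Fin (d+1) → ℕ)
    (hpt0 : ∀ j, ∀ c < k j, pt j c ≠ z0) :
    ∀ (js : List (Fin (d+1))), js.Nodup →
    ∀ (R : MvPolynomial (Fin (d+1) × Fin t) F) (e : Fin (d+1) → ℕ),
    (∀ j ∈ js, ∀ p ∈ mkOps ((j, z0) : Fin (d+1) × Fin t) (fun c => (j, pt j c)) (k j),
      rename (Equiv.swap p.1 p.2) R = R) →
    demList (js.flatMap fun j => mkOps ((j, z0) : Fin (d+1) × Fin t) (fun c => (j, pt j c)) (k j))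
        (R * (js.map fun j => (X ((j, z0) : Fin (d+1) × Fin t) : MvPolynomial _ F) ^ (e j)).prod)
      = R * (js.map fun j =>
          demList (mkOps ((j, z0) : Fin (d+1) × Fin t) (fun c => (j, pt j c)) (k j))
            ((X ((j, z0) : Fin (d+1) × Fin t) : MvPolynomial _ F) ^ (e j))).prod := by
  intro js
  induction js with
  | nil => intro _ R e _; simp
  | cons j rest ih =>
      intro hnd R e hR
      have hndr : rest.Nodup := (List.nodup_cons.mp hnd).2
      have hjr : j ∉ rest := (List.nodup_cons.mp hnd).1
      have hl1 : ∀ p ∈ mkOps ((j, z0) : Fin (d+1) × Fin t) (fun c => (j, pt j c)) (k j), p.1 ≠ p.2 := by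
        intro p hp
        obtain ⟨c, hc, rfl⟩ := mkOps_mem hp
        intro hcon
        exact hpt0 j c hc (congrArg Prod.snd hcon).symm
      have hlrest : ∀ j' ∈ rest, ∀ p ∈ mkOps ((j', z0) : Fin (d+1) × Fin t) (fun c => (j', pt j' c)) (k j'), p.1 ≠ p.2 := by
        intro j' _ p hp
        obtain ⟨c, hc, rfl⟩ := mkOps_mem hp
        intro hcon
        exact hpt0 j' c hc (congrArg Prod.snd hcon).symm
      simp only [List.flatMap_cons, List.map_cons, List.prod_cons]
      rw [demList_append]
      -- step 1 : process block j
      have hrw : R * ((X ((j, z0) : Fin (d+1) × Fin t) : MvPolynomial _ F) ^ (e j) *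
          (rest.map fun j' => (X ((j', z0) : Fin (d+1) × Fin t) : MvPolynomial _ F) ^ (e j')).prod)
          = (R * (rest.map fun j' => (X ((j', z0) : Fin (d+1) × Fin t) : MvPolynomial _ F) ^ (e j')).prod)
            * (X ((j, z0) : Fin (d+1) × Fin t) : MvPolynomial _ F) ^ (e j) := by ring
      rw [hrw]
      have hginv : ∀ p ∈ mkOps ((j, z0) : Fin (d+1) × Fin t) (fun c => (j, pt j c)) (k j),
          rename (Equiv.swap p.1 p.2)
            (R * (rest.map fun j' => (X ((j', z0) : Fin (d+1) × Fin t) : MvPolynomial _ F) ^ (e j')).prod)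
          = R * (rest.map fun j' => (X ((j', z0) : Fin (d+1) × Fin t) : MvPolynomial _ F) ^ (e j')).prod := by
        intro p hp
        obtain ⟨c, hc, rfl⟩ := mkOps_mem hp
        rw [map_mul, hR j (List.mem_cons_self) _ hp]
        congr 1
        rw [map_list_prod, List.map_map]
        refine congrArg List.prod (List.map_congr_left fun j' hj' => ?_)
        have hjj' : j' ≠ j := fun h => hjr (h ▸ hj')
        simp only [Function.comp_apply]
        rw [map_pow, rename_X, Equiv.swap_apply_of_ne_of_ne]
        · intro h; rw [Prod.mk.injEq] at h; exact hjj' h.1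
        · intro h; rw [Prod.mk.injEq] at h; exact hjj' h.1
      rw [demList_mul_inv _ hl1 _ _ hginv]
      -- step 2 : process remaining blocks
      have hrw2 : R * (rest.map fun j' => (X ((j', z0) : Fin (d+1) × Fin t) : MvPolynomial _ F) ^ (e j')).prod
            * demList (mkOps ((j, z0) : Fin (d+1) × Fin t) (fun c => (j, pt j c)) (k j))
                ((X ((j, z0) : Fin (d+1) × Fin t) : MvPolynomial _ F) ^ (e j))
          = (R * demList (mkOps ((j, z0) : Fin (d+1) × Fin t) (fun c => (j, pt j c)) (k j))
                ((X ((j, z0) : Fin (d+1) × Fin t) : MvPolynomial _ F) ^ (e j)))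
            * (rest.map fun j' => (X ((j', z0) : Fin (d+1) × Fin t) : MvPolynomial _ F) ^ (e j')).prod := by ring
      rw [hrw2]
      rw [ih hndr _ e ?_]
      · ring
      · intro j' hj' p hp
        obtain ⟨c, hc, rfl⟩ := mkOps_mem hp
        rw [map_mul, hR j' (List.mem_cons_of_mem j hj') _ hp]
        congr 1
        -- invariance of the block-j demList result under block-j' swaps
        have hjj' : j ≠ j' := fun h => hjr (h ▸ hj')
        rw [demList_rename_comm _ hl1 _ _ ?_ _]
        · congr 1
          rw [map_pow, rename_X, Equiv.swap_apply_of_ne_of_ne]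
          · intro h; rw [Prod.mk.injEq] at h; exact hjj' h.1
          · intro h; rw [Prod.mk.injEq] at h; exact hjj' h.1
        · intro q hq
          obtain ⟨c2, hc2, rfl⟩ := mkOps_mem hq
          refine ⟨?_, ?_, ?_, ?_⟩ <;> intro h <;> rw [Prod.mk.injEq] at h <;> exact hjj' h.1.symm
end Master
lemma demList_vanish (l : List (σ × σ)) (hl : ∀ p ∈ l, p.1 ≠ p.2) (V : Set (σ → F))
    (hstab : ∀ p ∈ l, ∀ φ ∈ V, (φ ∘ (Equiv.swap p.1 p.2)) ∈ V)
    (hdist : ∀ p ∈ l, ∀ φ ∈ V, φ p.1 ≠ φ p.2) :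
    ∀ f : MvPolynomial σ F, (∀ φ ∈ V, eval φ f = 0) → ∀ φ ∈ V, eval φ (demList l f) = 0 := by
  induction l with
  | nil => intro f hf φ hφ; exact hf φ hφ
  | cons p l ih =>
      intro f hf φ hφ
      rw [demList_cons]
      refine ih (fun q hq => hl q (List.mem_cons_of_mem p hq))
        (fun q hq => hstab q (List.mem_cons_of_mem p hq))
        (fun q hq => hdist q (List.mem_cons_of_mem p hq)) _ ?_ φ hφ
      intro ψ hψ
      have h1 := dem_eval p.1 p.2 (hl p (List.mem_cons_self)) f ψ
      rw [hf _ (hstab p (List.mem_cons_self) ψ hψ), hf ψ hψ, sub_zero] at h1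
      have h2 : ψ p.1 - ψ p.2 ≠ 0 := sub_ne_zero_of_ne (hdist p (List.mem_cons_self) ψ hψ)
      exact (mul_eq_zero.mp h1).resolve_left h2

end Dem

-- counting lemma
lemma count_mod (tt ss l : ℕ) (hss : 0 < ss) (hdvd : ss ∣ tt) (hl : l < ss) :
    ((Finset.univ : Finset (Fin tt)).filter fun i => i.val % ss = l).card = tt / ss := by
  rw [← Fintype.card_fin (tt / ss)]
  rw [← Finset.card_univ]
  refine Finset.card_bij' (fun i _ => (⟨i.val / ss, Nat.div_lt_div_of_lt_of_dvd hdvd i.isLt⟩ : Fin (tt / ss)))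
    (fun j _ => (⟨l + ss * j.val, by
      calc l + ss * j.val < ss + ss * j.val := by omega
      _ = ss * (j.val + 1) := by ring
      _ ≤ ss * (tt / ss) := Nat.mul_le_mul_left ss (by omega)
      _ = tt := Nat.mul_div_cancel' hdvd⟩ : Fin tt)) ?_ ?_ ?_ ?_
  · intro i hi
    simp
  · intro j hj
    simp only [Finset.mem_filter, Finset.mem_univ, true_and]
    exact by simp [Nat.add_mul_mod_self_left, Nat.mod_eq_of_lt hl]
  · intro i hi
    simp only [Finset.mem_filter, Finset.mem_univ, true_and] at hi
    apply Fin.ext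
    simp only []
    conv_rhs => rw [← Nat.mod_add_div i.val ss]
    rw [hi]
  · intro j hj
    apply Fin.ext
    simp only []
    rw [Nat.add_mul_div_left _ _ hss, Nat.div_eq_of_lt hl, zero_add]

lemma swap_pair {d t : ℕ} (jj : Fin (d+1)) (aa bb : Fin t) (v : Fin (d+1) × Fin t) :
    Equiv.swap (jj, aa) (jj, bb) v = (v.1, if v.1 = jj then Equiv.swap aa bb v.2 else v.2) := by
  rcases v with ⟨j', i⟩
  by_cases hj : j' = jj
  · subst hj
    by_cases hia : i = aa
    · subst hia; simp [Equiv.swap_apply_left]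
    · by_cases hib : i = bb
      · subst hib; simp [Equiv.swap_apply_right]
      · rw [Equiv.swap_apply_of_ne_of_ne (by simp [Prod.mk.injEq, hia]) (by simp [Prod.mk.injEq, hib])]
        simp [Equiv.swap_apply_of_ne_of_ne hia hib]
  · rw [Equiv.swap_apply_of_ne_of_ne (by simp [Prod.mk.injEq, hj]) (by simp [Prod.mk.injEq, hj])]
    simp [hj]

lemma filter_card_equiv {α : Type*} [Fintype α] [DecidableEq α] (e : α ≃ α) (p : α → Prop)
    [DecidablePred p] :
    ((Finset.univ : Finset α).filter fun x => p (e x)).card = (Finset.univ.filter p).card := by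
  refine Finset.card_bij' (fun x _ => e x) (fun y _ => e.symm y) ?_ ?_ ?_ ?_
  · intro x hx; simp only [Finset.mem_filter, Finset.mem_univ, true_and] at hx ⊢; exact hx
  · intro y hy; simp only [Finset.mem_filter, Finset.mem_univ, true_and] at hy ⊢; simpa using hy
  · intro x hx; simp
  · intro y hy; simp

theorem core {F : Type*} [Field F] [DecidableEq F] (S : Finset F) (s : ℕ) (hs : 2 ≤ s)
    (hS : S.card = s) (d t : ℕ) (ht : t = s ^ 3)
    (Q P : MvPolynomial (Fin (d+1) × Fin t) F)
    (hQvars : ∀ α ∈ Q.support, ∀ (j : Fin (d+1)) (c : Fin t), c.val ≠ 0 → α (j, c) = 0)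
    (hQexp : ∀ α ∈ Q.support, ∀ v, α v ≤ s - 1)
    (hQdeg : d < Q.totalDegree)
    (hPdeg : P.totalDegree ≤ d)
    (hagree : ∀ y : Fin (d+1) × Fin t → ↥S,
        (∀ j, IsBalancedTuple S t (fun i => (y (j, i) : F))) →
        eval (fun v => ((y v : F))) Q = eval (fun v => (y v : F)) P) : False := by
  classical
  have spos : 0 < s := by omega
  have tpos : 0 < t := by rw [ht]; positivity
  have hst : s ≤ t := by
    rw [ht]
    calc s = s ^ 1 := (pow_one s).symm
    _ ≤ s ^ 3 := Nat.pow_le_pow_right (by omega) (by omega)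
  set z0 : Fin t := ⟨0, tpos⟩ with hz0
  -- extremal monomial
  have hQne : Q ≠ 0 := by
    intro h
    rw [h, totalDegree_zero] at hQdeg
    omega
  obtain ⟨mh, hmhmem, hmhdeg⟩ : ∃ mh ∈ Q.support, Q.totalDegree = mh.sum fun _ e => e := by
    obtain ⟨a, ha, h⟩ := Finset.exists_mem_eq_sup Q.support
      (MvPolynomial.support_nonempty.mpr hQne) (fun m : (Fin (d+1) × Fin t) →₀ ℕ => m.sum fun _ e => e)
    exact ⟨a, ha, h⟩
  set k : Fin (d+1) → ℕ := fun j => mh (j, z0) with hk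
  -- sums over slot-0
  have slot0_sum : ∀ (α : (Fin (d+1) × Fin t) →₀ ℕ), (∀ (j : Fin (d+1)) (c : Fin t), c.val ≠ 0 → α (j, c) = 0) →
      (α.sum fun _ e => e) = ∑ j, α (j, z0) := by
    intro α hα
    rw [Finsupp.sum_fintype _ _ (fun _ => rfl), Fintype.sum_prod_type]
    refine Finset.sum_congr rfl fun j _ => ?_
    refine Finset.sum_eq_single z0 (fun c _ hc => hα j c ?_) (fun h => absurd (Finset.mem_univ z0) h)
    intro hval
    exact hc (Fin.ext hval)
  have hksum : ∑ j, k j = Q.totalDegree := by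
    rw [hmhdeg, slot0_sum mh (fun j c hc => hQvars mh hmhmem j c hc)]
  have hk_lt_s : ∀ j, k j < s := by
    intro j
    have h1 := hQexp mh hmhmem (j, z0)
    have h2 : k j = mh (j, z0) := rfl
    omega
  -- partners
  set pt : Fin (d+1) → ℕ → Fin t := fun j c => ⟨(c+1) % t, Nat.mod_lt _ tpos⟩ with hpt
  have hptval : ∀ j (c : ℕ), c < k j → (pt j c).val = c + 1 := by
    intro j c hc
    have : c + 1 < t := by have := hk_lt_s j; omega
    simp [hpt, Nat.mod_eq_of_lt this]
  have hpt0 : ∀ j, ∀ c < k j, pt j c ≠ z0 := by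
    intro j c hc h
    have := congrArg Fin.val h
    rw [hptval j c hc] at this
    simp [hz0] at this
  have hptinj : ∀ j, ∀ c < k j, ∀ c' < k j, c ≠ c' → pt j c ≠ pt j c' := by
    intro j c hc c' hc' hne h
    have := congrArg Fin.val h
    rw [hptval j c hc, hptval j c' hc'] at this
    omega
  -- the op list
  set L : List ((Fin (d+1) × Fin t) × (Fin (d+1) × Fin t)) :=
    (List.finRange (d+1)).flatMap (fun j => mkOps ((j, z0)) (fun c => (j, pt j c)) (k j)) with hL
  have hLmem : ∀ p ∈ L, ∃ j, ∃ c < k j, p = ((j, z0), (j, pt j c)) := by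
    intro p hp
    rw [hL, List.mem_flatMap] at hp
    obtain ⟨j, _, hpj⟩ := hp
    obtain ⟨c, hc, rfl⟩ := mkOps_mem hpj
    exact ⟨j, c, hc, rfl⟩
  have hLne : ∀ p ∈ L, p.1 ≠ p.2 := by
    intro p hp h
    obtain ⟨j, c, hc, rfl⟩ := hLmem p hp
    exact hpt0 j c hc (congrArg Prod.snd h).symm
  have hLlen : L.length = Q.totalDegree := by
    rw [hL, List.length_flatMap, ← hksum]
    rw [show List.map (fun j => (mkOps ((j, z0) : Fin (d+1) × Fin t) (fun c => (j, pt j c)) (k j)).length) (List.finRange (d+1)) = List.map k (List.finRange (d+1)) from ?_]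
    · rw [← Fin.sum_univ_def]
    · refine List.map_congr_left fun j _ => ?_
      simp [mkOps]
  -- P side dies
  have hP0 : demList L P = 0 := by
    rcases demList_deg L hLne P with h | h
    · exact h
    · rw [hLlen] at h
      omega
  -- ===== Q side =====
  set Gb : Fin (d+1) → ℕ → MvPolynomial (Fin (d+1) × Fin t) F := fun j e =>
    demList (mkOps ((j, z0)) (fun c => (j, pt j c)) (k j)) ((X ((j, z0)) : MvPolynomial _ F) ^ e)
    with hGb
  have hGbval : ∀ j, ∀ e ≤ k j, Gb j e = if e = k j then (-1 : MvPolynomial (Fin (d+1) × Fin t) F) ^ (k j) else 0 := by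
    intro j e he
    refine block_lemma ((j, z0)) (k j) (fun c => (j, pt j c)) ?_ ?_ e he
    · intro c hc h
      exact hpt0 j c hc (congrArg Prod.snd h)
    · intro c hc c' hc' hne h
      exact hptinj j c hc c' hc' hne (congrArg Prod.snd h)
  have hmono : ∀ (α : (Fin (d+1) × Fin t) →₀ ℕ) (cc : F),
      (∀ (j : Fin (d+1)) (c : Fin t), c.val ≠ 0 → α (j, c) = 0) →
      (monomial α cc : MvPolynomial (Fin (d+1) × Fin t) F)
        = C cc * ((List.finRange (d+1)).map fun j =>
            (X ((j, z0)) : MvPolynomial (Fin (d+1) × Fin t) F) ^ (α (j, z0))).prod := by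
    intro α cc hα
    rw [monomial_eq]
    congr 1
    rw [Finsupp.prod_fintype _ _ (fun v => pow_zero _), Fintype.prod_prod_type, ← Fin.prod_univ_def]
    refine Finset.prod_congr rfl fun j _ => ?_
    refine Finset.prod_eq_single z0 (fun c _ hc => ?_) (fun h => absurd (Finset.mem_univ z0) h)
    rw [hα j c (fun hval => hc (Fin.ext hval)), pow_zero]
  have hdem_mono : ∀ (α : (Fin (d+1) × Fin t) →₀ ℕ) (cc : F),
      (∀ (j : Fin (d+1)) (c : Fin t), c.val ≠ 0 → α (j, c) = 0) →
      demList L (monomial α cc)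
        = C cc * ((List.finRange (d+1)).map fun j => Gb j (α (j, z0))).prod := by
    intro α cc hα
    rw [hmono α cc hα, hL]
    exact master z0 pt k hpt0 (List.finRange (d+1)) (List.nodup_finRange _) (C cc)
      (fun j => α (j, z0)) (fun j _ p hp => rename_C _ _)
  have hQdem : demList L Q
      = C (coeff mh Q) * (-1 : MvPolynomial (Fin (d+1) × Fin t) F) ^ Q.totalDegree := by
    conv_lhs => rw [← support_sum_monomial_coeff Q]
    rw [demList_sum L hLne]
    rw [Finset.sum_eq_single mh ?_ ?_]
    · rw [hdem_mono mh (coeff mh Q) (hQvars mh hmhmem)]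
      congr 1
      rw [← Fin.prod_univ_def]
      rw [show (∏ j : Fin (d+1), Gb j (mh (j, z0)))
          = ∏ j : Fin (d+1), ((-1 : MvPolynomial (Fin (d+1) × Fin t) F) ^ (k j)) from
        Finset.prod_congr rfl fun j _ => by rw [hGbval j (mh (j, z0)) (le_refl _), if_pos rfl]]
      rw [Finset.prod_pow_eq_pow_sum, hksum]
    · intro α hα hne
      rw [hdem_mono α _ (hQvars α hα)]
      have hex : ∃ j0, α (j0, z0) < k j0 := by
        by_contra hcon
        push_neg at hcon
        have hsum_le : (α.sum fun _ e => e) ≤ Q.totalDegree := le_totalDegree hα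
        have hαsum : (α.sum fun _ e => e) = ∑ j, α (j, z0) := slot0_sum α (hQvars α hα)
        have hpoint : ∀ j, α (j, z0) = k j := by
          intro j
          by_contra hne2
          have hlt : k j < α (j, z0) := lt_of_le_of_ne (hcon j) (fun h => hne2 h.symm)
          have hstrict : ∑ j, k j < ∑ j, α (j, z0) :=
            Finset.sum_lt_sum (fun i _ => hcon i) ⟨j, Finset.mem_univ j, hlt⟩
          omega
        refine hne (Finsupp.ext fun v => ?_)
        rcases v with ⟨j, c⟩
        by_cases hc : c.val = 0
        · have hcz : c = z0 := Fin.ext hc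
          rw [hcz, hpoint j]
        · rw [hQvars α hα j c hc, hQvars mh hmhmem j c hc]
      obtain ⟨j0, hj0⟩ := hex
      have hzero : Gb j0 (α (j0, z0)) = 0 := by
        rw [hGbval j0 _ (le_of_lt hj0), if_neg (by omega)]
      rw [List.prod_eq_zero, mul_zero]
      rw [List.mem_map]
      exact ⟨j0, List.mem_finRange j0, hzero⟩
    · intro h
      exact absurd hmhmem h
  -- ===== the evaluation set V =====
  set V : Set ((Fin (d+1) × Fin t) → F) := {φ |
      (∀ j, IsBalancedTuple S t (fun i => φ (j, i))) ∧
      ∀ j, ∀ i i' : Fin t, i.val ≤ k j → i'.val ≤ k j → i ≠ i' → φ (j, i) ≠ φ (j, i')} with hV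
  have hstab : ∀ p ∈ L, ∀ φ ∈ V, (φ ∘ (Equiv.swap p.1 p.2)) ∈ V := by
    rintro p hp φ hφ
    obtain ⟨j, c, hc, rfl⟩ := hLmem p hp
    have hτbound : ∀ i : Fin t, i.val ≤ k j → ((Equiv.swap z0 (pt j c)) i).val ≤ k j := by
      intro i hi
      by_cases h1 : i = z0
      · rw [h1, Equiv.swap_apply_left, hptval j c hc]
        omega
      · by_cases h2 : i = pt j c
        · rw [h2, Equiv.swap_apply_right]
          exact Nat.zero_le _
        · rw [Equiv.swap_apply_of_ne_of_ne h1 h2]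
          exact hi
    constructor
    · intro j'
      by_cases hj' : j' = j
      · subst hj'
        have hfun : (fun i => (φ ∘ (Equiv.swap ((j', z0)) ((j', pt j' c)))) (j', i))
            = fun i => φ (j', Equiv.swap z0 (pt j' c) i) := by
          funext i
          simp only [Function.comp_apply]
          rw [swap_pair]
          simp
        rw [hfun]
        refine ⟨fun i => (hφ.1 j').1 _, fun a ha => ?_⟩
        rw [show (Finset.univ.filter fun i => φ (j', Equiv.swap z0 (pt j' c) i) = a)
            = Finset.univ.filter fun i => (fun i0 => φ (j', i0) = a) (Equiv.swap z0 (pt j' c) i) from rfl]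
        rw [filter_card_equiv (Equiv.swap z0 (pt j' c)) (fun i0 => φ (j', i0) = a)]
        exact (hφ.1 j').2 a ha
      · have hfun : (fun i => (φ ∘ (Equiv.swap ((j, z0)) ((j, pt j c)))) (j', i))
            = fun i => φ (j', i) := by
          funext i
          simp only [Function.comp_apply]
          rw [swap_pair]
          simp [hj']
        rw [hfun]
        exact hφ.1 j'
    · intro j' i i' hi hi' hne
      simp only [Function.comp_apply]
      rw [swap_pair, swap_pair]
      by_cases hj' : j' = j
      · subst hj'
        simp only [if_pos rfl]
        exact hφ.2 j' _ _ (hτbound i hi) (hτbound i' hi') ((Equiv.swap z0 (pt j' c)).injective.ne hne)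
      · simp only [if_neg hj']
        exact hφ.2 j' i i' hi hi' hne
  have hdist : ∀ p ∈ L, ∀ φ ∈ V, φ p.1 ≠ φ p.2 := by
    rintro p hp φ hφ
    obtain ⟨j, c, hc, rfl⟩ := hLmem p hp
    refine hφ.2 j z0 (pt j c) (Nat.zero_le _) ?_ ?_
    · rw [hptval j c hc]; omega
    · intro h
      have := congrArg Fin.val h
      rw [hptval j c hc] at this
      simp [hz0] at this
  have hvanish0 : ∀ φ ∈ V, eval φ (Q - P) = 0 := by
    intro φ hφ
    rw [map_sub, sub_eq_zero]
    exact hagree (fun v => ⟨φ v, (hφ.1 v.1).1 v.2⟩) (fun j => hφ.1 j)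
  -- ===== the explicit evaluation point =====
  set es : ↥S ≃ Fin s := S.equivFin.trans (finCongr hS) with hes
  set φ0 : (Fin (d+1) × Fin t) → F :=
    fun v => ((es.symm ⟨v.2.val % s, Nat.mod_lt _ spos⟩ : ↥S) : F) with hφ0
  have hφ0V : φ0 ∈ V := by
    constructor
    · intro j
      refine ⟨fun i => (es.symm _).2, fun a ha => ?_⟩
      have hdvd : s ∣ t := ⟨s ^ 2, by rw [ht]; ring⟩
      have hcond : ∀ i : Fin t, (φ0 (j, i) = a) ↔ (i.val % s = (es ⟨a, ha⟩).val) := by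
        intro i
        have h1 : (φ0 (j, i) = a) ↔ es.symm ⟨i.val % s, Nat.mod_lt _ spos⟩ = (⟨a, ha⟩ : ↥S) :=
          ⟨fun h => Subtype.ext h, fun h => congrArg Subtype.val h⟩
        rw [h1, Equiv.symm_apply_eq, Fin.ext_iff]
      rw [Finset.filter_congr (fun i _ => hcond i), count_mod t s _ spos hdvd (es ⟨a, ha⟩).isLt, hS]
    · intro j i i' hi hi' hne h
      have h1 : es.symm ⟨i.val % s, Nat.mod_lt _ spos⟩ = es.symm ⟨i'.val % s, Nat.mod_lt _ spos⟩ :=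
        Subtype.ext h
      have h2 := congrArg es h1
      rw [Equiv.apply_symm_apply, Equiv.apply_symm_apply] at h2
      have h3 := congrArg Fin.val h2
      have hklt := hk_lt_s j
      simp only [] at h3
      rw [Nat.mod_eq_of_lt (by omega), Nat.mod_eq_of_lt (by omega)] at h3
      exact hne (Fin.ext h3)
  -- ===== conclusion =====
  have hvan := demList_vanish L hLne V hstab hdist (Q - P) hvanish0 φ0 hφ0V
  rw [demList_sub L hLne, hP0, sub_zero, hQdem] at hvan
  rw [map_mul, eval_C, map_pow, map_neg, map_one] at hvan
  have hcz : coeff mh Q = 0 := by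
    rcases mul_eq_zero.mp hvan with h | h
    · exact h
    · exact absurd h (pow_ne_zero _ (neg_ne_zero.mpr one_ne_zero))
  exact mem_support_iff.mp hmhmem hcz


section InterpPart
variable {F : Type*} [Field F] [DecidableEq F]

-- univariate polynomial substituted into one MvPolynomial variable
noncomputable def uni {σ : Type*} (v : σ) (B : Polynomial F) : MvPolynomial σ F :=
  Polynomial.eval₂ MvPolynomial.C (X v) B

lemma uni_eval {σ : Type*} (v : σ) (B : Polynomial F) (φ : σ → F) :
    eval φ (uni v B) = B.eval (φ v) := by
  rw [uni, Polynomial.hom_eval₂]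
  have : (eval φ).comp (MvPolynomial.C : F →+* MvPolynomial σ F) = RingHom.id F := by
    ext x
    simp
  rw [this, eval_X]
  rfl

lemma uni_support {σ : Type*} [DecidableEq σ] (v : σ) (B : Polynomial F) :
    ∀ α ∈ (uni v B : MvPolynomial σ F).support, ∃ k ≤ B.natDegree, α = Finsupp.single v k := by
  intro α hα
  rw [mem_support_iff] at hα
  rw [uni, Polynomial.eval₂_eq_sum, Polynomial.sum] at hα
  rw [coeff_sum] at hα
  obtain ⟨k, hk, hne⟩ := Finset.exists_ne_zero_of_sum_ne_zero hα
  rw [C_mul_X_pow_eq_monomial, coeff_monomial] at hne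
  refine ⟨k, Polynomial.le_natDegree_of_mem_supp k hk, ?_⟩
  by_contra h
  exact hne (if_neg fun hcon => h hcon.symm)

-- Lagrange basis on the node set S
noncomputable def lag (S : Finset F) (a : ↥S) : Polynomial F :=
  Lagrange.basis Finset.univ (fun x : ↥S => (x : F)) a

lemma lag_inj (S : Finset F) : Set.InjOn (fun x : ↥S => (x : F)) ↑(Finset.univ : Finset ↥S) :=
  fun x _ y _ h => Subtype.ext h

lemma lag_natDegree (S : Finset F) (a : ↥S) : (lag S a).natDegree = S.card - 1 := by
  rw [lag, Lagrange.natDegree_basis (lag_inj S) (Finset.mem_univ a), Finset.card_univ,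
    Fintype.card_coe]

lemma lag_eval_self (S : Finset F) (a : ↥S) : (lag S a).eval (a : F) = 1 :=
  Lagrange.eval_basis_self (lag_inj S) (Finset.mem_univ a)

lemma lag_eval_ne (S : Finset F) (a b : ↥S) (h : a ≠ b) : (lag S a).eval (b : F) = 0 :=
  Lagrange.eval_basis_of_ne h (Finset.mem_univ b)

-- interpolation of a junta
section Interp
variable (S : Finset F) {n : ℕ} (s0 : ↥S)

noncomputable def pad (A : Finset (Fin n)) (c : ↥A → ↥S) : Fin n → ↥S :=
  fun i => if h : i ∈ A then c ⟨i, h⟩ else s0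

noncomputable def interp (A : Finset (Fin n)) (f : (Fin n → ↥S) → F) : MvPolynomial (Fin n) F :=
  ∑ c : (↥A → ↥S), MvPolynomial.C (f (pad S s0 A c)) * ∏ i : ↥A, uni (i : Fin n) (lag S (c i))

lemma interp_eval (A : Finset (Fin n)) (f : (Fin n → ↥S) → F)
    (hf : ∀ x y : Fin n → ↥S, (∀ i ∈ A, x i = y i) → f x = f y) (x : Fin n → ↥S) :
    eval (fun i => (x i : F)) (interp S s0 A f) = f x := by
  rw [interp, map_sum]
  have hterm : ∀ c : ↥A → ↥S,
      eval (fun i => (x i : F)) (MvPolynomial.C (f (pad S s0 A c)) * ∏ i : ↥A, uni (i : Fin n) (lag S (c i)))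
      = f (pad S s0 A c) * ∏ i : ↥A, (lag S (c i)).eval ((x i : F)) := by
    intro c
    rw [map_mul, eval_C, map_prod]
    congr 1
    exact Finset.prod_congr rfl fun i _ => uni_eval _ _ _
  rw [Finset.sum_congr rfl fun c _ => hterm c]
  rw [Finset.sum_eq_single (fun i : ↥A => x i)]
  · rw [show (∏ i : ↥A, (lag S ((fun i : ↥A => x i) i)).eval ((x i : F))) = 1 from
      Finset.prod_eq_one fun i _ => lag_eval_self S (x i)]
    rw [mul_one]
    refine hf _ _ fun i hi => ?_
    rw [pad, dif_pos hi]
  · intro c _ hne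
    have : ∃ i : ↥A, c i ≠ x i := by
      by_contra h
      push_neg at h
      exact hne (funext h)
    obtain ⟨i, hi⟩ := this
    rw [Finset.prod_eq_zero (Finset.mem_univ i) (lag_eval_ne S (c i) (x i) hi), mul_zero]
  · intro h
    exact absurd (Finset.mem_univ _) h

lemma interp_support (A : Finset (Fin n)) (f : (Fin n → ↥S) → F) :
    ∀ α ∈ (interp S s0 A f).support, (∀ v, α v ≤ S.card - 1) ∧ (α.support ⊆ A) := by
  have hprod : ∀ (c : ↥A → ↥S) (T : Finset ↥A),
      ∀ α ∈ (∏ i ∈ T, uni ((i : ↥A) : Fin n) (lag S (c i))).support,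
        (∀ v, α v ≤ S.card - 1) ∧ (∀ v ∈ α.support, ∃ i ∈ T, (i : Fin n) = v) := by
    intro c T
    induction T using Finset.induction_on with
    | empty =>
        intro α hα
        rw [Finset.prod_empty] at hα
        have hα0 : α = 0 := by
          by_contra h
          have := mem_support_iff.mp hα
          rw [coeff_one, if_neg (fun hcon => h hcon.symm)] at this
          exact this rfl
        subst hα0
        exact ⟨fun v => Nat.zero_le _, fun v hv => absurd hv (by simp)⟩
    | insert i T hnotin ih =>
        intro α hα
        rw [Finset.prod_insert hnotin] at hα
        obtain ⟨β, hβ, γ, hγ, rfl⟩ := Finset.mem_add.mp (MvPolynomial.support_mul _ _ hα)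
        obtain ⟨kk, hkk, rfl⟩ := uni_support ((i : ↥A) : Fin n) (lag S (c i)) β hβ
        have hkk' : kk ≤ S.card - 1 := by
          rw [lag_natDegree] at hkk
          exact hkk
        obtain ⟨hγ1, hγ2⟩ := ih γ hγ
        constructor
        · intro v
          rw [Finsupp.add_apply, Finsupp.single_apply]
          by_cases hv : ((i : ↥A) : Fin n) = v
          · have hγv : γ v = 0 := by
              by_contra h
              obtain ⟨i', hi'T, hi'v⟩ := hγ2 v (Finsupp.mem_support_iff.mpr h)
              have : i' = i := Subtype.ext (hi'v.trans hv.symm)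
              exact hnotin (this ▸ hi'T)
            rw [if_pos hv, hγv, add_zero]
            exact hkk'
          · rw [if_neg hv, zero_add]
            exact hγ1 v
        · intro v hv
          rw [Finsupp.mem_support_iff, Finsupp.add_apply] at hv
          by_cases hvi : ((i : ↥A) : Fin n) = v
          · exact ⟨i, Finset.mem_insert_self i T, hvi⟩
          · rw [Finsupp.single_apply, if_neg hvi, zero_add] at hv
            obtain ⟨i', hi', hv'⟩ := hγ2 v (Finsupp.mem_support_iff.mpr hv)
            exact ⟨i', Finset.mem_insert_of_mem hi', hv'⟩
  intro α hα
  have hcoeff := mem_support_iff.mp hα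
  rw [interp, coeff_sum] at hcoeff
  obtain ⟨c, _, hc⟩ := Finset.exists_ne_zero_of_sum_ne_zero hcoeff
  have hα' : α ∈ (MvPolynomial.C (f (pad S s0 A c)) * ∏ i : ↥A, uni ((i : ↥A) : Fin n) (lag S (c i))).support :=
    mem_support_iff.mpr hc
  obtain ⟨β, hβ, γ, hγ, rfl⟩ := Finset.mem_add.mp (MvPolynomial.support_mul _ _ hα')
  have hβ0 : β = 0 := by
    have := mem_support_iff.mp hβ
    by_contra h
    rw [coeff_C, if_neg (fun hcon => h hcon.symm)] at this
    exact this rfl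
  subst hβ0
  rw [zero_add]
  obtain ⟨h1, h2⟩ := hprod c Finset.univ γ hγ
  refine ⟨h1, fun v hv => ?_⟩
  obtain ⟨i, _, hiv⟩ := h2 v hv
  exact hiv ▸ i.2

end Interp
end InterpPart

section ExistsBad
variable {F : Type*} [Field F] [DecidableEq F]

lemma mapDomain_apply_sum {α β : Type*} [DecidableEq β] (f : α → β) (m : α →₀ ℕ) (w : β) :
    Finsupp.mapDomain f m w = ∑ i ∈ m.support, if f i = w then m i else 0 := by
  rw [Finsupp.mapDomain, Finsupp.sum_apply, Finsupp.sum]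
  exact Finset.sum_congr rfl fun i _ => Finsupp.single_apply

lemma mapDomain_degsum {α β : Type*} (f : α → β) (m : α →₀ ℕ) :
    ((Finsupp.mapDomain f m).sum fun _ e => e) = m.sum fun _ e => e :=
  Finsupp.sum_mapDomain_index (fun _ => rfl) (fun _ _ _ => rfl)

theorem exists_bad (S : Finset F) (s : ℕ) (hs : 2 ≤ s) (hS : S.card = s)
    {n : ℕ} (d t : ℕ) (ht : t = s ^ 3)
    (g : (Fin n → ↥S) → F) (hjd : JuntaDegLE d g)
    (hnd : ¬ ∃ P : MvPolynomial (Fin n) F, P.totalDegree ≤ d ∧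
      ∀ x : Fin n → ↥S, MvPolynomial.eval (fun i => (x i : F)) P = g x) :
    ∃ μ0 : Fin n → Fin (d + 1) × Fin t,
      (∀ i, (μ0 i).2.val = 0) ∧
      ∃ Q : MvPolynomial (Fin (d + 1) × Fin t) F,
        (∀ α ∈ Q.support, ∀ (j : Fin (d+1)) (c : Fin t), c.val ≠ 0 → α (j, c) = 0) ∧
        (∀ α ∈ Q.support, ∀ v, α v ≤ s - 1) ∧
        (d < Q.totalDegree) ∧
        (∀ y : Fin (d + 1) × Fin t → ↥S,
          eval (fun v => (y v : F)) Q = g (fun i => y (μ0 i))) := by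
  classical
  have spos : 0 < s := by omega
  have tpos : 0 < t := by rw [ht]; positivity
  set z0 : Fin t := ⟨0, tpos⟩ with hz0
  obtain ⟨x0, hx0⟩ := Finset.card_pos.mp (show 0 < S.card by omega)
  set s0 : ↥S := ⟨x0, hx0⟩ with hs0
  obtain ⟨t₀, Ds, fs, hcard, hdep, hgsum⟩ := hjd
  set Pg : MvPolynomial (Fin n) F := ∑ j : Fin t₀, interp S s0 (Ds j) (fs j) with hPg
  have hPgeval : ∀ x : Fin n → ↥S, eval (fun i => (x i : F)) Pg = g x := by
    intro x
    rw [hPg, map_sum, Finset.sum_congr rfl fun j _ => interp_eval S s0 (Ds j) (fs j) (hdep j) x]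
    exact (hgsum x).symm
  have hPgsupp : ∀ α ∈ Pg.support, (∀ v, α v ≤ s - 1) ∧ ∃ j, α.support ⊆ Ds j := by
    intro α hα
    have hcoeff := mem_support_iff.mp hα
    rw [hPg, coeff_sum] at hcoeff
    obtain ⟨j, _, hc⟩ := Finset.exists_ne_zero_of_sum_ne_zero hcoeff
    obtain ⟨h1, h2⟩ := interp_support S s0 (Ds j) (fs j) α (mem_support_iff.mpr hc)
    exact ⟨fun v => hS ▸ h1 v, ⟨j, h2⟩⟩
  have hPgdeg : d < Pg.totalDegree := by
    by_contra h
    push_neg at h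
    exact hnd ⟨Pg, h, hPgeval⟩
  obtain ⟨mh, hmhmem, hmhdeg⟩ : ∃ mh ∈ Pg.support, Pg.totalDegree = mh.sum fun _ e => e := by
    refine Finset.exists_mem_eq_sup Pg.support (MvPolynomial.support_nonempty.mpr ?_) _
    intro h
    rw [h, totalDegree_zero] at hPgdeg
    omega
  set A : Finset (Fin n) := mh.support with hA
  have hAd : A.card ≤ d := by
    obtain ⟨_, j, hsub⟩ := hPgsupp mh hmhmem
    exact le_trans (Finset.card_le_card hsub) (hcard j)
  set eA : ↥A ≃ Fin A.card := A.equivFin with heA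
  set blast : Fin (d+1) := ⟨d, Nat.lt_succ_self d⟩ with hblast
  have hbj_lt : ∀ a : ↥A, (eA a).val < d + 1 := fun a => by
    have := (eA a).isLt
    omega
  set bj : ↥A → Fin (d+1) := fun a => ⟨(eA a).val, hbj_lt a⟩ with hbj
  have hbj_ne_blast : ∀ a, bj a ≠ blast := by
    intro a h
    have h1 := congrArg Fin.val h
    have h2 := (eA a).isLt
    simp only [hbj, hblast] at h1
    omega
  have hbj_inj : ∀ a a', bj a = bj a' → a = a' := by
    intro a a' h
    have h1 := congrArg Fin.val h
    simp only [hbj] at h1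
    exact eA.injective (Fin.ext h1)
  set μ0 : Fin n → Fin (d+1) × Fin t :=
    fun i => if h : i ∈ A then (bj ⟨i, h⟩, z0) else (blast, z0) with hμ0
  set vstar : Fin (d+1) × Fin t := (blast, z0) with hvstar
  have hμ0snd : ∀ i, (μ0 i).2 = z0 := by
    intro i
    by_cases h : i ∈ A <;> simp [hμ0, h, hvstar]
  have hμ0A : ∀ i (h : i ∈ A), μ0 i = (bj ⟨i, h⟩, z0) := fun i h => by simp [hμ0, h]
  have hμ0nA : ∀ i, i ∉ A → μ0 i = vstar := fun i h => by simp [hμ0, h, hvstar]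
  have hμ0_vstar_iff : ∀ i, μ0 i = vstar ↔ i ∉ A := by
    intro i
    constructor
    · intro h hiA
      rw [hμ0A i hiA] at h
      exact hbj_ne_blast ⟨i, hiA⟩ (congrArg Prod.fst h)
    · exact hμ0nA i
  -- representation of Q'
  set Q' : MvPolynomial (Fin (d+1) × Fin t) F := rename μ0 Pg with hQ'
  have hQ'rep : Q' = ∑ m ∈ Pg.support, monomial (Finsupp.mapDomain μ0 m) (coeff m Pg) := by
    rw [hQ']
    conv_lhs => rw [← support_sum_monomial_coeff Pg]
    rw [map_sum]
    exact Finset.sum_congr rfl fun m _ => rename_monomial _ _ _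
  have hQ'mem : ∀ α ∈ Q'.support, ∃ m ∈ Pg.support, Finsupp.mapDomain μ0 m = α := by
    intro α hα
    have hcoeff := mem_support_iff.mp hα
    rw [hQ'rep, coeff_sum] at hcoeff
    obtain ⟨m, hm, hc⟩ := Finset.exists_ne_zero_of_sum_ne_zero hcoeff
    rw [coeff_monomial] at hc
    refine ⟨m, hm, ?_⟩
    by_contra h
    exact hc (if_neg h)
  have hQ'vars : ∀ α ∈ Q'.support, ∀ (j : Fin (d+1)) (c : Fin t), c.val ≠ 0 → α (j, c) = 0 := by
    intro α hα j c hc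
    obtain ⟨m, hm, rfl⟩ := hQ'mem α hα
    rw [mapDomain_apply_sum]
    refine Finset.sum_eq_zero fun i _ => ?_
    rw [if_neg]
    intro hcon
    have := congrArg Prod.snd hcon
    rw [hμ0snd i] at this
    exact hc (congrArg Fin.val this.symm)
  have hQ'sum : ∀ α ∈ Q'.support, (α.sum fun _ e => e) ≤ Pg.totalDegree := by
    intro α hα
    obtain ⟨m, hm, rfl⟩ := hQ'mem α hα
    rw [mapDomain_degsum]
    exact le_totalDegree hm
  have hQ'exp : ∀ α ∈ Q'.support, ∀ v, v ≠ vstar → α v ≤ s - 1 := by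
    intro α hα v hv
    obtain ⟨m, hm, rfl⟩ := hQ'mem α hα
    rw [mapDomain_apply_sum]
    by_cases hex : ∃ i0 ∈ m.support, μ0 i0 = v
    · obtain ⟨i0, hi0, hi0v⟩ := hex
      rw [Finset.sum_eq_single i0]
      · rw [if_pos hi0v]
        exact (hPgsupp m hm).1 i0
      · intro i _ hii0
        rw [if_neg]
        intro hcon
        -- two distinct preimages of v ≠ vstar: impossible
        have hiA : i ∈ A := by
          by_contra hiA
          exact hv ((hμ0nA i hiA) ▸ hcon.symm) |>.elim
        have hi0A : i0 ∈ A := by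
          by_contra hi0A
          exact hv ((hμ0nA i0 hi0A) ▸ hi0v.symm) |>.elim
        have : μ0 i = μ0 i0 := hcon.trans hi0v.symm
        rw [hμ0A i hiA, hμ0A i0 hi0A] at this
        have := hbj_inj _ _ (congrArg Prod.fst this)
        exact hii0 (congrArg Subtype.val this)
      · intro h
        exact absurd hi0 h
    · push_neg at hex
      rw [Finset.sum_eq_zero fun i hi => if_neg (hex i hi)]
      omega
  set Mstar : (Fin (d+1) × Fin t) →₀ ℕ := Finsupp.mapDomain μ0 mh with hMstar
  have hMstar_vstar : Mstar vstar = 0 := by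
    rw [hMstar, mapDomain_apply_sum]
    refine Finset.sum_eq_zero fun i hi => ?_
    rw [if_neg]
    intro hcon
    exact ((hμ0_vstar_iff i).mp hcon) (hA ▸ hi)
  have hslot : ∀ (m : Fin n →₀ ℕ) (i : Fin n) (h : i ∈ A),
      Finsupp.mapDomain μ0 m (bj ⟨i, h⟩, z0) = m i := by
    intro m i h
    rw [mapDomain_apply_sum]
    by_cases him : i ∈ m.support
    · rw [Finset.sum_eq_single i]
      · rw [if_pos (hμ0A i h)]
      · intro i' hi' hne
        rw [if_neg]
        intro hcon
        have hi'A : i' ∈ A := by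
          by_contra hi'A
          have := (hμ0nA i' hi'A) ▸ hcon
          exact hbj_ne_blast ⟨i, h⟩ (congrArg Prod.fst this).symm
        rw [hμ0A i' hi'A] at hcon
        have := hbj_inj _ _ (congrArg Prod.fst hcon)
        exact hne (congrArg Subtype.val this)
      · intro h'
        exact absurd him h'
    · rw [Finset.sum_eq_zero, (Finsupp.notMem_support_iff.mp him)]
      intro i' hi'
      rw [if_neg]
      intro hcon
      have hi'A : i' ∈ A := by
        by_contra hi'A
        have := (hμ0nA i' hi'A) ▸ hcon
        exact hbj_ne_blast ⟨i, h⟩ (congrArg Prod.fst this).symm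
      rw [hμ0A i' hi'A] at hcon
      have := hbj_inj _ _ (congrArg Prod.fst hcon)
      have : i' = i := congrArg Subtype.val this
      subst this
      exact him hi'
  have hpre : ∀ m ∈ Pg.support, Finsupp.mapDomain μ0 m = Mstar → m = mh := by
    intro m hm hmap
    ext i
    by_cases h : i ∈ A
    · have h1 : Finsupp.mapDomain μ0 m (bj ⟨i, h⟩, z0) = m i := hslot m i h
      have h2 : Finsupp.mapDomain μ0 mh (bj ⟨i, h⟩, z0) = mh i := hslot mh i h
      rw [hmap, hMstar] at h1
      rw [← h1, h2]
    · have hmh0 : mh i = 0 := Finsupp.notMem_support_iff.mp (hA ▸ h)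
      rw [hmh0]
      by_contra hmi
      have h1 : Finsupp.mapDomain μ0 m vstar ≠ 0 := by
        rw [mapDomain_apply_sum]
        intro hzero
        rw [Finset.sum_eq_zero_iff] at hzero
        have := hzero i (Finsupp.mem_support_iff.mpr hmi)
        rw [if_pos (hμ0nA i h)] at this
        exact hmi this
      rw [hmap] at h1
      exact h1 hMstar_vstar
  have hcoeffMstar : coeff Mstar Q' = coeff mh Pg := by
    rw [hQ'rep, coeff_sum]
    rw [Finset.sum_eq_single mh]
    · rw [coeff_monomial, if_pos rfl]
    · intro m hm hne
      rw [coeff_monomial, if_neg]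
      intro hcon
      exact hne (hpre m hm hcon)
    · intro h
      exact absurd hmhmem h
  have hMstar_sum : (Mstar.sum fun _ e => e) = Pg.totalDegree := by
    rw [hMstar, mapDomain_degsum, ← hmhdeg]
  -- ===== the univariate reduction polynomials =====
  set BU : ℕ → Polynomial F := fun e =>
    if e < s then Polynomial.X ^ e else ∑ a : ↥S, Polynomial.C ((a : F) ^ e) * lag S a with hBU
  have hBUeval : ∀ e (u : ↥S), (BU e).eval (u : F) = (u : F) ^ e := by
    intro e u
    simp only [hBU]
    by_cases he : e < s
    · rw [if_pos he, Polynomial.eval_pow, Polynomial.eval_X]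
    · rw [if_neg he, Polynomial.eval_finset_sum]
      rw [Finset.sum_eq_single u]
      · rw [Polynomial.eval_mul, Polynomial.eval_C, lag_eval_self, mul_one]
      · intro a _ hne
        rw [Polynomial.eval_mul, Polynomial.eval_C, lag_eval_ne S a u hne, mul_zero]
      · intro h
        exact absurd (Finset.mem_univ u) h
  have hBUdeg : ∀ e, (BU e).natDegree ≤ s - 1 := by
    intro e
    simp only [hBU]
    by_cases he : e < s
    · rw [if_pos he, Polynomial.natDegree_X_pow]
      omega
    · rw [if_neg he]
      refine le_trans (Polynomial.natDegree_sum_le _ _) ?_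
      rw [Finset.fold_max_le]
      refine ⟨Nat.zero_le _, fun a _ => ?_⟩
      refine le_trans (Polynomial.natDegree_C_mul_le _ _) ?_
      rw [lag_natDegree, hS]
  have hBU0 : BU 0 = 1 := by
    simp only [hBU]
    rw [if_pos (by omega : (0:ℕ) < s), pow_zero]
  -- ===== the reduced polynomial Q =====
  set Q : MvPolynomial (Fin (d+1) × Fin t) F :=
    ∑ α ∈ Q'.support, monomial (α.erase vstar) (coeff α Q') * uni vstar (BU (α vstar)) with hQ
  -- evaluation of Q agrees with Q' on S-valued points
  have hQeval : ∀ φ : (Fin (d+1) × Fin t) → F, (∀ v, φ v ∈ S) → eval φ Q = eval φ Q' := by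
    intro φ hφ
    rw [hQ, map_sum]
    conv_rhs => rw [← support_sum_monomial_coeff Q', map_sum]
    refine Finset.sum_congr rfl fun α hα => ?_
    rw [map_mul, uni_eval, hBUeval (α vstar) ⟨φ vstar, hφ vstar⟩]
    have hdecomp : (monomial α (coeff α Q') : MvPolynomial (Fin (d+1) × Fin t) F)
        = monomial (α.erase vstar) (coeff α Q') * X vstar ^ (α vstar) := by
      rw [X_pow_eq_monomial, monomial_mul, mul_one, Finsupp.erase_add_single]
    rw [hdecomp, map_mul, map_pow, eval_X]
  have hQevaly : ∀ y : Fin (d+1) × Fin t → ↥S,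
      eval (fun v => (y v : F)) Q = g (fun i => y (μ0 i)) := by
    intro y
    rw [hQeval _ (fun v => (y v).2), hQ', eval_rename]
    exact hPgeval (fun i => y (μ0 i))
  -- support facts for Q
  have hQmem : ∀ α ∈ Q.support, ∃ α' ∈ Q'.support, ∃ k ≤ s - 1,
      α = (α'.erase vstar) + Finsupp.single vstar k := by
    intro α hα
    have hcoeff := mem_support_iff.mp hα
    rw [hQ, coeff_sum] at hcoeff
    obtain ⟨α', hα', hc⟩ := Finset.exists_ne_zero_of_sum_ne_zero hcoeff
    have hmem : α ∈ (monomial (α'.erase vstar) (coeff α' Q') * uni vstar (BU (α' vstar))).support :=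
      mem_support_iff.mpr hc
    obtain ⟨β, hβ, γ, hγ, rfl⟩ := Finset.mem_add.mp (MvPolynomial.support_mul _ _ hmem)
    have hβv : β = α'.erase vstar := by
      rw [support_monomial] at hβ
      split_ifs at hβ
      · exact absurd hβ (Finset.notMem_empty β)
      · exact Finset.mem_singleton.mp hβ
    obtain ⟨k, hk, rfl⟩ := uni_support vstar (BU (α' vstar)) γ hγ
    exact ⟨α', hα', k, le_trans hk (hBUdeg _), by rw [hβv]⟩
  have hQvars : ∀ α ∈ Q.support, ∀ (j : Fin (d+1)) (c : Fin t), c.val ≠ 0 → α (j, c) = 0 := by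
    intro α hα j c hc
    obtain ⟨α', hα', k, hk, rfl⟩ := hQmem α hα
    have hne : ((j, c) : Fin (d+1) × Fin t) ≠ vstar := by
      intro h
      rw [hvstar] at h
      have := congrArg Prod.snd h
      exact hc (congrArg Fin.val this)
    rw [Finsupp.add_apply, Finsupp.single_apply, if_neg (fun h => hne h.symm),
      Finsupp.erase_ne hne, hQ'vars α' hα' j c hc, add_zero]
  have hQexp : ∀ α ∈ Q.support, ∀ v, α v ≤ s - 1 := by
    intro α hα v
    obtain ⟨α', hα', k, hk, rfl⟩ := hQmem α hα
    rw [Finsupp.add_apply, Finsupp.single_apply]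
    by_cases hv : v = vstar
    · subst hv
      rw [Finsupp.erase_same, if_pos rfl, zero_add]
      exact hk
    · rw [Finsupp.erase_ne hv, if_neg (fun h => hv h.symm), add_zero]
      exact hQ'exp α' hα' v hv
  -- the key coefficient of Q
  have herase_Mstar : Mstar.erase vstar = Mstar := by
    ext v
    by_cases hv : v = vstar
    · rw [hv, Finsupp.erase_same, hMstar_vstar]
    · rw [Finsupp.erase_ne hv]
  have hcoeff_term : ∀ α' ∈ Q'.support,
      coeff Mstar (monomial (α'.erase vstar) (coeff α' Q') * uni vstar (BU (α' vstar)))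
      = if α' = Mstar then coeff Mstar Q' else 0 := by
    intro α' hα'
    rw [uni, Polynomial.eval₂_eq_sum, Polynomial.sum, Finset.mul_sum, coeff_sum]
    have hterm : ∀ k ∈ (BU (α' vstar)).support,
        coeff Mstar (monomial (α'.erase vstar) (coeff α' Q') * (C ((BU (α' vstar)).coeff k) * X vstar ^ k))
        = if (α'.erase vstar) + Finsupp.single vstar k = Mstar
          then coeff α' Q' * (BU (α' vstar)).coeff k else 0 := by
      intro k _
      rw [C_mul_X_pow_eq_monomial, monomial_mul, coeff_monomial]
    rw [Finset.sum_congr rfl hterm]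
    by_cases hcase : α' = Mstar
    · rw [if_pos hcase]
      have hα'v : α' vstar = 0 := by rw [hcase]; exact hMstar_vstar
      have hα'erase : α'.erase vstar = Mstar := by rw [hcase, herase_Mstar]
      rw [hα'v, hBU0]
      have hones : ∀ k ∈ (1 : Polynomial F).support,
          (if (α'.erase vstar) + Finsupp.single vstar k = Mstar
            then coeff α' Q' * (1 : Polynomial F).coeff k else 0)
          = if k = 0 then coeff Mstar Q' else 0 := by
        intro k hk
        have hk0 : k = 0 := by
          have := Polynomial.mem_support_iff.mp hk
          rw [Polynomial.coeff_one] at this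
          by_contra h
          exact this (if_neg h)
        subst hk0
        rw [Polynomial.coeff_one_zero, mul_one,
          if_pos (by rw [Finsupp.single_zero, add_zero, hα'erase]), if_pos rfl, hcase]
      rw [Finset.sum_congr rfl hones,
        Finset.sum_ite_eq' _ 0 (fun _ => coeff Mstar Q'),
        if_pos (Polynomial.mem_support_iff.mpr (by rw [Polynomial.coeff_one_zero]; exact one_ne_zero))]
    · rw [if_neg hcase]
      refine Finset.sum_eq_zero fun k _ => ?_
      rw [if_neg]
      intro hcon
      -- from hcon : erase + single = Mstar, derive k = 0 and erase = Mstar, then α' too big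
      have hkval := congrArg (fun m : (Fin (d+1) × Fin t) →₀ ℕ => m vstar) hcon
      simp only [Finsupp.add_apply, Finsupp.erase_same, Finsupp.single_eq_same, zero_add] at hkval
      rw [hMstar_vstar] at hkval
      have hγ : α'.erase vstar = Mstar := by
        rw [hkval, Finsupp.single_zero, add_zero] at hcon
        exact hcon
      have hα'ne : α' vstar ≠ 0 := by
        intro h0
        apply hcase
        rw [← Finsupp.erase_add_single vstar α', h0, Finsupp.single_zero, add_zero, hγ]
      -- α' = Mstar + single vstar (α' vstar), so its degree exceeds totalDegree Pg
      have hsum : (α'.sum fun _ e => e) = (Mstar.sum fun _ e => e) + α' vstar := by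
        conv_lhs => rw [← Finsupp.erase_add_single vstar α']
        rw [Finsupp.sum_add_index' (fun _ => rfl) (fun _ _ _ => rfl), hγ,
          Finsupp.sum_single_index rfl]
      have hle := hQ'sum α' hα'
      rw [hsum, hMstar_sum] at hle
      omega
  have hQcoeff : coeff Mstar Q = coeff mh Pg := by
    rw [hQ, coeff_sum, Finset.sum_congr rfl hcoeff_term]
    rw [Finset.sum_ite_eq' Q'.support Mstar (fun _ => coeff Mstar Q')]
    rw [if_pos, hcoeffMstar]
    rw [mem_support_iff, hcoeffMstar]
    exact mem_support_iff.mp hmhmem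
  have hQdeg : d < Q.totalDegree := by
    have hne : coeff Mstar Q ≠ 0 := by
      rw [hQcoeff]
      exact mem_support_iff.mp hmhmem
    have := le_totalDegree (mem_support_iff.mpr hne)
    rw [hMstar_sum] at this
    omega
  exact ⟨μ0, fun i => congrArg Fin.val (hμ0snd i), Q, hQvars, hQexp, hQdeg, hQevaly⟩

end ExistsBad

lemma juntaSZ {M : Type*} [Fintype M] [DecidableEq M] {W : Type*} [AddCommGroup W] :
    ∀ (n : ℕ) (d : ℕ) (Φ : (Fin n → M) → W), JuntaDegLE (D := fun _ : Fin n => M) d Φ →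
    ∀ μ₀ : Fin n → M, Φ μ₀ ≠ 0 →
    (Fintype.card M) ^ (n - d) ≤ (Finset.univ.filter (fun μ : Fin n → M => Φ μ ≠ 0)).card := by
  intro n
  induction n with
  | zero =>
      intro d Φ _ μ₀ h
      rw [Nat.zero_sub, pow_zero]
      refine Finset.card_pos.mpr ⟨μ₀, ?_⟩
      rw [Finset.mem_filter]
      exact ⟨Finset.mem_univ _, h⟩
  | succ n ih =>
      intro d Φ hΦ μ₀ hμ₀
      by_cases hnd : n + 1 ≤ d
      · have h0 : (n + 1) - d = 0 := by omega
        rw [h0, pow_zero]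
        exact Finset.card_pos.mpr ⟨μ₀, Finset.mem_filter.mpr ⟨Finset.mem_univ _, hμ₀⟩⟩
      push_neg at hnd
      obtain ⟨t₀, Ds, fs, hcard, hdep, hsum⟩ := hΦ
      set Φs : M → (Fin n → M) → W := fun a ν => Φ (Fin.cons a ν) with hΦs
      by_cases hall : ∀ a, ∃ ν, Φs a ν ≠ 0
      · -- Case 1 : all slices nonzero
        have hslice_junta : ∀ a, JuntaDegLE (D := fun _ : Fin n => M) d (Φs a) := by
          intro a
          refine ⟨t₀, fun j => Finset.univ.filter (fun i : Fin n => i.succ ∈ Ds j),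
            fun j ν => fs j (Fin.cons a ν), fun j => ?_, fun j x y hxy => ?_, fun ν => hsum _⟩
          · refine le_trans (Finset.card_le_card_of_injOn (fun i => i.succ) ?_ ?_) (hcard j)
            · intro i hi
              exact (Finset.mem_filter.mp hi).2
            · intro i _ i' _ h
              exact Fin.succ_injective n h
          · refine hdep j _ _ fun i hi => ?_
            rcases Fin.eq_zero_or_eq_succ i with h0 | ⟨i', rfl⟩
            · subst h0; simp
            · simp only [Fin.cons_succ]
              exact hxy i' (Finset.mem_filter.mpr ⟨Finset.mem_univ _, hi⟩)
        have hcount : ∀ a : M, (Fintype.card M) ^ (n - d) ≤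
            (Finset.univ.filter (fun ν : Fin n → M => Φs a ν ≠ 0)).card := by
          intro a
          obtain ⟨ν, hν⟩ := hall a
          exact ih d (Φs a) (hslice_junta a) ν hν
        have hsplit : (Finset.univ.filter (fun μ : Fin (n+1) → M => Φ μ ≠ 0)).card =
            ∑ a : M, (Finset.univ.filter (fun ν : Fin n → M => Φs a ν ≠ 0)).card := by
          rw [Finset.card_eq_sum_card_fiberwise
            (f := fun μ : Fin (n+1) → M => μ 0) (t := Finset.univ) (fun μ _ => Finset.mem_univ _)]
          refine Finset.sum_congr rfl fun a _ => ?_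
          refine Finset.card_bij' (fun μ _ => Fin.tail μ) (fun ν _ => Fin.cons a ν) ?_ ?_ ?_ ?_
          · intro μ hμ
            rw [Finset.mem_filter] at hμ
            obtain ⟨hμ1, hμ2⟩ := hμ
            rw [Finset.mem_filter] at hμ1 ⊢
            refine ⟨Finset.mem_univ _, ?_⟩
            subst hμ2
            show Φ (Fin.cons (μ 0) (Fin.tail μ)) ≠ 0
            rw [Fin.cons_self_tail]
            exact hμ1.2
          · intro ν hν
            rw [Finset.mem_filter] at hν ⊢
            refine ⟨Finset.mem_filter.mpr ⟨Finset.mem_univ _, hν.2⟩, ?_⟩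
            simp
          · intro μ hμ
            rw [Finset.mem_filter] at hμ
            obtain ⟨hμ1, hμ2⟩ := hμ
            subst hμ2
            exact Fin.cons_self_tail μ
          · intro ν _
            simp
        rw [hsplit]
        have hpow : (Fintype.card M) ^ (n + 1 - d)
            = Fintype.card M * (Fintype.card M) ^ (n - d) := by
          rw [show n + 1 - d = (n - d) + 1 from by omega, pow_succ]
          ring
        rw [hpow]
        calc Fintype.card M * (Fintype.card M) ^ (n - d)
            = ∑ _a : M, (Fintype.card M) ^ (n - d) := by
              rw [Finset.sum_const, Finset.card_univ, smul_eq_mul]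
          _ ≤ _ := Finset.sum_le_sum fun a _ => hcount a
      · -- Case 2 : some slice identically zero
        push_neg at hall
        obtain ⟨a₀, ha₀⟩ := hall
        have hb : Φs (μ₀ 0) (Fin.tail μ₀) ≠ 0 := by
          rw [hΦs]
          simpa [Fin.cons_self_tail] using hμ₀
        set b := μ₀ 0 with hbdef
        have hd1 : 1 ≤ d := by
          by_contra hcon
          push_neg at hcon
          have hDempty : ∀ j, Ds j = ∅ := by
            intro j
            refine Finset.card_eq_zero.mp ?_
            have := hcard j
            omega
          have hconst : Φ (Fin.cons a₀ (Fin.tail μ₀)) = Φ μ₀ := by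
            rw [hsum, hsum]
            refine Finset.sum_congr rfl fun j _ => hdep j _ _ fun i hi => ?_
            rw [hDempty j] at hi
            exact absurd hi (Finset.notMem_empty i)
          exact hμ₀ (hconst ▸ (ha₀ (Fin.tail μ₀)))
        have hjb : JuntaDegLE (D := fun _ : Fin n => M) (d - 1) (Φs b) := by
          refine ⟨t₀, fun j => if (0 : Fin (n+1)) ∈ Ds j
              then Finset.univ.filter (fun i : Fin n => i.succ ∈ Ds j) else ∅,
            fun j ν => if (0 : Fin (n+1)) ∈ Ds j
              then fs j (Fin.cons b ν) - fs j (Fin.cons a₀ ν) else 0,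
            fun j => ?_, fun j x y hxy => ?_, fun ν => ?_⟩
          · by_cases h0 : (0 : Fin (n+1)) ∈ Ds j
            · simp only [h0, if_true]
              have hle : (Finset.univ.filter (fun i : Fin n => i.succ ∈ Ds j)).card
                  ≤ ((Ds j).erase 0).card := by
                refine Finset.card_le_card_of_injOn (fun i => i.succ) ?_ ?_
                · intro i hi
                  exact Finset.mem_erase.mpr ⟨Fin.succ_ne_zero i, (Finset.mem_filter.mp hi).2⟩
                · intro i _ i' _ h
                  exact Fin.succ_injective n h
              rw [Finset.card_erase_of_mem h0] at hle
              have := hcard j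
              omega
            · simp only [h0, if_false]
              simp
          · by_cases h0 : (0 : Fin (n+1)) ∈ Ds j
            · simp only [h0, if_true]
              have hxy' : ∀ i ∈ Finset.univ.filter (fun i : Fin n => i.succ ∈ Ds j), x i = y i := by
                simpa [h0] using hxy
              have e1 : fs j (Fin.cons b x) = fs j (Fin.cons b y) := by
                refine hdep j _ _ fun i hi => ?_
                rcases Fin.eq_zero_or_eq_succ i with hz | ⟨i', rfl⟩
                · subst hz; simp
                · simp only [Fin.cons_succ]
                  exact hxy' i' (Finset.mem_filter.mpr ⟨Finset.mem_univ _, hi⟩)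
              have e2 : fs j (Fin.cons a₀ x) = fs j (Fin.cons a₀ y) := by
                refine hdep j _ _ fun i hi => ?_
                rcases Fin.eq_zero_or_eq_succ i with hz | ⟨i', rfl⟩
                · subst hz; simp
                · simp only [Fin.cons_succ]
                  exact hxy' i' (Finset.mem_filter.mpr ⟨Finset.mem_univ _, hi⟩)
              rw [e1, e2]
            · simp only [h0, if_false]
          · calc Φs b ν
                = (∑ j, fs j (Fin.cons b ν)) - (∑ j, fs j (Fin.cons a₀ ν)) := by
                  have hz : Φ (Fin.cons a₀ ν) = 0 := ha₀ ν
                  rw [← hsum, ← hsum, hz, sub_zero]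
              _ = ∑ j, (fs j (Fin.cons b ν) - fs j (Fin.cons a₀ ν)) :=
                  (Finset.sum_sub_distrib _ _).symm
              _ = ∑ j, (if (0 : Fin (n+1)) ∈ Ds j
                    then fs j (Fin.cons b ν) - fs j (Fin.cons a₀ ν) else 0) := by
                  refine Finset.sum_congr rfl fun j _ => ?_
                  by_cases h0 : (0 : Fin (n+1)) ∈ Ds j
                  · simp only [h0, if_true]
                  · simp only [h0, if_false]
                    refine sub_eq_zero.mpr (hdep j _ _ fun i hi => ?_)
                    rcases Fin.eq_zero_or_eq_succ i with hz | ⟨i', rfl⟩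
                    · subst hz
                      exact absurd hi h0
                    · simp only [Fin.cons_succ]
        have hcount := ih (d - 1) (Φs b) hjb (Fin.tail μ₀) hb
        have hinj : (Finset.univ.filter (fun ν : Fin n → M => Φs b ν ≠ 0)).card ≤
            (Finset.univ.filter (fun μ : Fin (n+1) → M => Φ μ ≠ 0)).card := by
          refine Finset.card_le_card_of_injOn (fun ν => Fin.cons b ν) ?_ ?_
          · intro ν hν
            simp only [Finset.mem_coe, Finset.mem_filter] at hν ⊢
            exact ⟨Finset.mem_univ _, hν.2⟩
          · intro ν _ ν' _ h
            have := congrArg Fin.tail h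
            simpa [Fin.tail_cons] using this
        refine le_trans ?_ (le_trans hcount hinj)
        have heq : n - (d - 1) = n + 1 - d := by omega
        rw [heq]

end Stmt13

theorem stmt13 {F : Type*} [Field F] [DecidableEq F] (S : Finset F) (s : ℕ)
    (hs : 2 ≤ s) (hS : S.card = s) {n : ℕ} (d t K : ℕ)
    (ht : t = s ^ 3) (hK : K = t * (d + 1))
    (g : (Fin n → ↥S) → F) (hjd : JuntaDegLE d g)
    (hnd : ¬ ∃ P : MvPolynomial (Fin n) F, P.totalDegree ≤ d ∧
      ∀ x : Fin n → ↥S, MvPolynomial.eval (fun i => (x i : F)) P = g x) :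
    K ^ (n - d) ≤
      (Finset.univ.filter (fun μ : Fin n → Fin (d + 1) × Fin t =>
        ¬ ∃ P : MvPolynomial (Fin (d + 1) × Fin t) F, P.totalDegree ≤ d ∧
          ∀ y : Fin (d + 1) × Fin t → ↥S,
            (∀ j : Fin (d + 1), IsBalancedTuple S t (fun i => (y (j, i) : F))) →
            MvPolynomial.eval (fun v => (y v : F)) P = g (fun i => y (μ i)))).card := by
  classical
  -- the submodule of degree-d functions on balanced tuples
  set U : Submodule F (((Fin (d+1) × Fin t) → ↥S) → F) :=
    { carrier := {f | ∃ P : MvPolynomial (Fin (d+1) × Fin t) F, P.totalDegree ≤ d ∧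
        ∀ y : Fin (d+1) × Fin t → ↥S,
          (∀ j : Fin (d+1), IsBalancedTuple S t (fun i => (y (j, i) : F))) →
          MvPolynomial.eval (fun v => (y v : F)) P = f y},
      add_mem' := by
        rintro f1 f2 ⟨P1, hP1, he1⟩ ⟨P2, hP2, he2⟩
        refine ⟨P1 + P2, le_trans (MvPolynomial.totalDegree_add P1 P2) (max_le hP1 hP2), ?_⟩
        intro y hy
        rw [map_add, he1 y hy, he2 y hy]
        rfl
      zero_mem' := by
        refine ⟨0, by simp, ?_⟩
        intro y hy
        simp
      smul_mem' := by
        rintro c f ⟨P, hP, he⟩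
        refine ⟨MvPolynomial.C c * P, ?_, ?_⟩
        · refine le_trans (MvPolynomial.totalDegree_mul _ _) ?_
          rw [MvPolynomial.totalDegree_C]
          omega
        · intro y hy
          rw [map_mul, MvPolynomial.eval_C, he y hy]
          rfl } with hU
  set Φ : (Fin n → Fin (d+1) × Fin t) → (((Fin (d+1) × Fin t) → ↥S) → F) ⧸ U :=
    fun μ => Submodule.Quotient.mk (fun y => g (fun i => y (μ i))) with hΦ
  have hgood_iff : ∀ μ : Fin n → Fin (d+1) × Fin t, (Φ μ = 0) ↔
      (∃ P : MvPolynomial (Fin (d + 1) × Fin t) F, P.totalDegree ≤ d ∧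
        ∀ y : Fin (d + 1) × Fin t → ↥S,
          (∀ j : Fin (d + 1), IsBalancedTuple S t (fun i => (y (j, i) : F))) →
          MvPolynomial.eval (fun v => (y v : F)) P = g (fun i => y (μ i))) := by
    intro μ
    show Submodule.Quotient.mk _ = (0 : _ ⧸ U) ↔ _
    rw [Submodule.Quotient.mk_eq_zero]
    rfl
  -- Φ has junta degree ≤ d
  have hΦjunta : JuntaDegLE (D := fun _ : Fin n => Fin (d+1) × Fin t) d Φ := by
    obtain ⟨t₀, Ds, fs, h1, h2, h3⟩ := hjd
    refine ⟨t₀, Ds, fun j μ => Submodule.Quotient.mk (fun y => fs j (fun i => y (μ i))),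
      h1, ?_, ?_⟩
    · intro j μ μ' hagree
      have hfe : (fun y : (Fin (d+1) × Fin t) → ↥S => fs j (fun i => y (μ i)))
          = fun y => fs j (fun i => y (μ' i)) := by
        funext y
        exact h2 j _ _ fun i hi => by rw [hagree i hi]
      exact congrArg Submodule.Quotient.mk hfe
    · intro μ
      show Submodule.Quotient.mk _ = _
      have hfe : (fun y : (Fin (d+1) × Fin t) → ↥S => g (fun i => y (μ i)))
          = ∑ j : Fin t₀, (fun y : (Fin (d+1) × Fin t) → ↥S => fs j (fun i => y (μ i))) := by
        funext y
        rw [Finset.sum_apply]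
        exact h3 _
      rw [hfe]
      rw [show (Submodule.Quotient.mk : _ → _ ⧸ U) = (U.mkQ : _ → _) from rfl]
      rw [map_sum]
  -- a bad μ exists
  obtain ⟨μ0, _, Q, hQvars, hQexp, hQdeg, hQeval⟩ :=
    Stmt13.exists_bad S s hs hS d t ht g hjd hnd
  have hΦμ0 : Φ μ0 ≠ 0 := by
    intro h0
    obtain ⟨P, hPdeg, hPev⟩ := (hgood_iff μ0).mp h0
    refine Stmt13.core S s hs hS d t ht Q P hQvars hQexp hQdeg hPdeg ?_
    intro y hy
    rw [hQeval y, hPev y hy]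
  have hcount := Stmt13.juntaSZ n d Φ hΦjunta μ0 hΦμ0
  have hcard : Fintype.card (Fin (d+1) × Fin t) = K := by
    rw [Fintype.card_prod, Fintype.card_fin, Fintype.card_fin, hK]
    ring
  rw [hcard] at hcount
  refine le_trans hcount (le_of_eq ?_)
  congr 1
  refine Finset.filter_congr fun μ _ => ?_
  rw [ne_eq, hgood_iff μ]
end

section
/- Let s ≥ 3, n ≥ 1, and let m be a natural number with n/32 ≤ m ≤ n. Let α ∈ (ZMod s)^n, let J = {i : α_i ≠ 0} and k = #α = |J|. Then the average of χ_α(y) over all y ∈ (ZMod s)^n with Hamming weight #y = m equals E_I[(−1/(s−1))^{|J ∩ I|}], where I ranges uniformly over all m-element subsets of {1,…,n}; in particular this average is a real number, and it is at most 2·2^{−k/2^{11}}. -/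
open Finset Real

/-- The character `χ_α(x) = ∏ i, ω^(α_i · x_i)` on `(ZMod s)^n`, where `ω` is a
primitive `s`-th root of unity. -/
noncomputable def chi {s : ℕ} (ω : ℂ) {n : ℕ} (α x : Fin n → ZMod s) : ℂ :=
  ∏ i, ω ^ (α i * x i).val

lemma char_sum {s : ℕ} [NeZero s] (ω : ℂ) (hω : IsPrimitiveRoot ω s)
    (a : ZMod s) : ∑ c : ZMod s, ω ^ (a * c).val = if a = 0 then (s : ℂ) else 0 := by
  have hωs : ω ^ s = 1 := hω.pow_eq_one
  have hmod : ∀ x : ℕ, ω ^ (x % s) = ω ^ x := by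
    intro x
    conv_rhs => rw [← Nat.div_add_mod x s, pow_add, pow_mul, hωs, one_pow, one_mul]
  by_cases ha : a = 0
  · simp [ha, ZMod.card]
  · simp only [if_neg ha]
    set ζ := ω ^ a.val with hζ
    have hterm : ∀ c : ZMod s, ω ^ (a * c).val = ζ ^ c.val := by
      intro c
      rw [ZMod.val_mul, hmod, pow_mul]
    rw [Finset.sum_congr rfl (fun c _ => hterm c)]
    have hζ1 : ζ ≠ 1 := by
      intro h
      have hdvd := (hω.pow_eq_one_iff_dvd a.val).mp h
      have hne : a.val ≠ 0 := by simpa [ZMod.val_eq_zero] using ha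
      have := Nat.le_of_dvd (Nat.pos_of_ne_zero hne) hdvd
      have hlt : a.val < s := ZMod.val_lt a
      omega
    have hsum : ∑ c : ZMod s, ζ ^ c.val = ∑ j ∈ Finset.range s, ζ ^ j := by
      refine Finset.sum_nbij' (fun c => c.val) (fun j => (j : ZMod s)) ?_ ?_ ?_ ?_ ?_
      · intro c _; exact Finset.mem_range.mpr (ZMod.val_lt c)
      · intro j _; exact Finset.mem_univ _
      · intro c _; exact ZMod.natCast_zmod_val c
      · intro j hj; exact ZMod.val_cast_of_lt (Finset.mem_range.mp hj)
      · intro c _; rfl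
    have hζs : ζ ^ s = 1 := by rw [hζ, ← pow_mul, mul_comm, pow_mul, hωs, one_pow]
    rw [hsum, geom_sum_eq hζ1, hζs]
    simp

variable {s n : ℕ}

/-- The finset of allowed values at coordinate `i` given support `I`. -/
def tI [NeZero s] (I : Finset (Fin n)) (i : Fin n) : Finset (ZMod s) :=
  if i ∈ I then Finset.univ \ {0} else {0}

lemma partition_lemma [NeZero s] {M : Type*} [AddCommMonoid M] (m : ℕ)
    (f : (Fin n → ZMod s) → M) :
    ∑ y ∈ Finset.univ.filter (fun y : Fin n → ZMod s => hammingNorm y = m), f y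
      = ∑ I ∈ Finset.powersetCard m (Finset.univ : Finset (Fin n)),
          ∑ y ∈ Fintype.piFinset (tI I), f y := by
  have hmaps : ∀ y ∈ Finset.univ.filter (fun y : Fin n → ZMod s => hammingNorm y = m),
      (Finset.univ.filter fun i => y i ≠ 0) ∈
        Finset.powersetCard m (Finset.univ : Finset (Fin n)) := by
    intro y hy
    rw [Finset.mem_powersetCard_univ]
    exact (Finset.mem_filter.mp hy).2
  rw [← Finset.sum_fiberwise_of_maps_to hmaps f]
  apply Finset.sum_congr rfl
  intro I hI
  apply Finset.sum_congr _ (fun _ _ => rfl)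
  ext y
  simp only [Finset.mem_filter, Finset.mem_univ, true_and, Fintype.mem_piFinset, tI]
  constructor
  · rintro ⟨hnorm, hsupp⟩ i
    by_cases hi : i ∈ I
    · simp only [if_pos hi, Finset.mem_sdiff, Finset.mem_univ, Finset.mem_singleton, true_and]
      rw [← hsupp] at hi
      exact (Finset.mem_filter.mp hi).2
    · simp only [if_neg hi, Finset.mem_singleton]
      rw [← hsupp] at hi
      by_contra h
      exact hi (Finset.mem_filter.mpr ⟨Finset.mem_univ _, h⟩)
  · intro h
    have hsupp : (Finset.univ.filter fun i => y i ≠ 0) = I := by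
      ext i
      simp only [Finset.mem_filter, Finset.mem_univ, true_and]
      have := h i
      by_cases hi : i ∈ I
      · simp only [if_pos hi, Finset.mem_sdiff, Finset.mem_univ, Finset.mem_singleton,
          true_and] at this
        exact ⟨fun _ => hi, fun _ => this⟩
      · simp only [if_neg hi, Finset.mem_singleton] at this
        exact ⟨fun hne => absurd this hne, fun h' => absurd h' hi⟩
    refine ⟨?_, hsupp⟩
    have : hammingNorm y = (Finset.univ.filter fun i => y i ≠ 0).card := rfl
    rw [this, hsupp]
    exact Finset.mem_powersetCard_univ.mp hI

lemma card_piFinset_tI [NeZero s] (hs : 3 ≤ s) (I : Finset (Fin n)) :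
    (Fintype.piFinset (tI (s := s) I)).card = (s - 1) ^ I.card := by
  rw [Fintype.card_piFinset]
  have : ∀ i : Fin n, (tI (s := s) I i).card = if i ∈ I then s - 1 else 1 := by
    intro i
    unfold tI
    by_cases hi : i ∈ I
    · simp only [if_pos hi]
      rw [Finset.card_sdiff_of_subset (Finset.singleton_subset_iff.mpr (Finset.mem_univ _))]
      simp [Finset.card_univ, ZMod.card]
    · simp [if_neg hi]
  rw [Finset.prod_congr rfl (fun i _ => this i)]
  rw [Finset.prod_ite_mem, Finset.univ_inter, Finset.prod_const]

lemma count_weight [NeZero s] (hs : 3 ≤ s) (m : ℕ) :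
    (Finset.univ.filter (fun y : Fin n → ZMod s => hammingNorm y = m)).card
      = n.choose m * (s - 1) ^ m := by
  have := partition_lemma (s := s) (n := n) (M := ℕ) m (fun _ => 1)
  simp only [Finset.sum_const, smul_eq_mul, mul_one, Finset.card_powersetCard] at this
  rw [this]
  have : ∀ I ∈ Finset.powersetCard m (Finset.univ : Finset (Fin n)),
      (Fintype.piFinset (tI (s := s) I)).card = (s-1) ^ m := by
    intro I hI
    rw [card_piFinset_tI hs, Finset.mem_powersetCard_univ.mp hI]
  rw [Finset.sum_congr rfl this, Finset.sum_const, smul_eq_mul, Finset.card_powersetCard,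
    Finset.card_univ, Fintype.card_fin]

lemma sum_over_support [NeZero s] (hs : 3 ≤ s) (ω : ℂ) (hω : IsPrimitiveRoot ω s)
    (α : Fin n → ZMod s) (J : Finset (Fin n))
    (hJ : J = Finset.univ.filter (fun i => α i ≠ 0))
    (m : ℕ) (I : Finset (Fin n)) (hI : I.card = m) :
    ∑ y ∈ Fintype.piFinset (tI I), chi ω α y
      = ((s : ℂ) - 1) ^ m * (-1 / ((s : ℂ) - 1)) ^ (J ∩ I).card := by
  have hs1 : (s : ℂ) - 1 ≠ 0 := by
    intro h
    have : (s : ℂ) = 1 := by linear_combination h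
    have := Nat.cast_injective (R := ℂ) |>.eq_iff.mp (by exact_mod_cast this : (s:ℂ) = ((1:ℕ):ℂ))
    omega
  unfold chi
  have hps := Finset.prod_univ_sum (tI (s := s) I) (fun i c => ω ^ (α i * c).val)
  rw [← hps]
  have hfac : ∀ i : Fin n, (∑ c ∈ tI (s := s) I i, ω ^ (α i * c).val)
      = if i ∈ I then (if α i = 0 then (s : ℂ) - 1 else -1) else 1 := by
    intro i
    unfold tI
    by_cases hi : i ∈ I
    · simp only [if_pos hi]
      rw [Finset.sum_sdiff_eq_sub (Finset.singleton_subset_iff.mpr (Finset.mem_univ _))]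
      rw [char_sum ω hω (α i), Finset.sum_singleton, mul_zero, ZMod.val_zero, pow_zero]
      by_cases hα : α i = 0
      · simp [hα]
      · simp [hα]
    · simp only [if_neg hi, Finset.sum_singleton, mul_zero, ZMod.val_zero, pow_zero]
  rw [Finset.prod_congr rfl (fun i _ => hfac i), Finset.prod_ite_mem, Finset.univ_inter]
  have hsplit : ∀ i ∈ I, (if α i = 0 then (s : ℂ) - 1 else -1)
      = ((s : ℂ) - 1) * (if i ∈ J then -1 / ((s : ℂ) - 1) else 1) := by
    intro i _
    subst hJ
    by_cases hα : α i = 0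
    · simp [hα]
    · simp only [Finset.mem_filter, Finset.mem_univ, true_and, if_neg hα, ne_eq, hα,
        not_false_eq_true, if_true, if_false]
      field_simp
  rw [Finset.prod_congr rfl hsplit, Finset.prod_mul_distrib, Finset.prod_const,
    Finset.prod_ite_mem, Finset.prod_const, hI, Finset.inter_comm]

lemma part1 [NeZero s] (hs : 3 ≤ s) (m : ℕ)
    (ω : ℂ) (hω : IsPrimitiveRoot ω s)
    (α : Fin n → ZMod s) (J : Finset (Fin n))
    (hJ : J = Finset.univ.filter (fun i => α i ≠ 0)) :
    (∑ y ∈ Finset.univ.filter (fun y : Fin n → ZMod s => hammingNorm y = m), chi ω α y)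
        / ((Finset.univ.filter (fun y : Fin n → ZMod s => hammingNorm y = m)).card : ℂ)
      = (((∑ I ∈ Finset.powersetCard m (Finset.univ : Finset (Fin n)),
            (-1 / ((s : ℝ) - 1)) ^ (J ∩ I).card) / (n.choose m) : ℝ) : ℂ) := by
  have hs1 : (s : ℂ) - 1 ≠ 0 := by
    intro h
    have h2 : (s : ℂ) = ((1 : ℕ) : ℂ) := by push_cast; linear_combination h
    have := Nat.cast_injective (R := ℂ) h2
    omega
  have hsum : (∑ y ∈ Finset.univ.filter (fun y : Fin n → ZMod s => hammingNorm y = m),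
      chi ω α y) = ((s : ℂ) - 1) ^ m *
        ∑ I ∈ Finset.powersetCard m (Finset.univ : Finset (Fin n)),
          (-1 / ((s : ℂ) - 1)) ^ (J ∩ I).card := by
    rw [partition_lemma m (chi ω α), Finset.mul_sum]
    apply Finset.sum_congr rfl
    intro I hI
    exact sum_over_support hs ω hω α J hJ m I (Finset.mem_powersetCard_univ.mp hI)
  have hcard : ((Finset.univ.filter
        (fun y : Fin n → ZMod s => hammingNorm y = m)).card : ℂ)
      = ((s : ℂ) - 1) ^ m * (n.choose m : ℂ) := by
    rw [count_weight hs m]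
    push_cast [Nat.cast_sub (by omega : 1 ≤ s)]
    ring
  rw [hsum, hcard]
  push_cast
  rw [mul_div_mul_left _ _ (pow_ne_zero m hs1)]


lemma choose_step {m : ℕ} (hm : 1 ≤ m) {b : ℕ} (hb : b ≤ 32 * m) :
    32 * Nat.choose (b - 1) m ≤ 31 * Nat.choose b m := by
  cases b with
  | zero => simp [Nat.choose_eq_zero_of_lt hm]
  | succ a =>
    have key := Nat.choose_mul_succ_eq a m
    have h2 : 32 * (a + 1 - m) ≤ 31 * (a + 1) := by omega
    have hmul : (32 * Nat.choose a m) * (a + 1) ≤ (31 * Nat.choose (a+1) m) * (a + 1) := by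
      calc (32 * Nat.choose a m) * (a + 1) = 32 * (Nat.choose a m * (a + 1)) := by ring
        _ = 32 * (Nat.choose (a+1) m * (a + 1 - m)) := by rw [key]
        _ = Nat.choose (a+1) m * (32 * (a + 1 - m)) := by ring
        _ ≤ Nat.choose (a+1) m * (31 * (a + 1)) := Nat.mul_le_mul_left _ h2
        _ = (31 * Nat.choose (a+1) m) * (a + 1) := by ring
    exact Nat.le_of_mul_le_mul_right hmul (by omega)

lemma choose_ratio {n m : ℕ} (hnm : n ≤ 32 * m) (hm : 1 ≤ m) (r : ℕ) :
    32 ^ r * Nat.choose (n - r) m ≤ 31 ^ r * Nat.choose n m := by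
  induction r with
  | zero => simp
  | succ r ih =>
    have hb : n - r ≤ 32 * m := by omega
    have step := choose_step hm hb
    have hsub : n - (r + 1) = (n - r) - 1 := by omega
    calc 32 ^ (r+1) * Nat.choose (n - (r+1)) m
        = 32 ^ r * (32 * Nat.choose ((n - r) - 1) m) := by rw [hsub]; ring
      _ ≤ 32 ^ r * (31 * Nat.choose (n - r) m) := Nat.mul_le_mul_left _ step
      _ = 31 * (32 ^ r * Nat.choose (n - r) m) := by ring
      _ ≤ 31 * (31 ^ r * Nat.choose n m) := Nat.mul_le_mul_left _ ih
      _ = 31 ^ (r+1) * Nat.choose n m := by ring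

lemma cover_count {n : ℕ} (J : Finset (Fin n)) (k u m : ℕ) (hk : J.card = k) (hu : u ≤ k) :
    ((Finset.powersetCard m (Finset.univ : Finset (Fin n))).filter
        (fun I => (J ∩ I).card ≤ u)).card
      ≤ Nat.choose k (k - u) * Nat.choose (n - (k - u)) m := by
  set r := k - u with hr
  have hsub : ((Finset.powersetCard m (Finset.univ : Finset (Fin n))).filter
        (fun I => (J ∩ I).card ≤ u))
      ⊆ (Finset.powersetCard r J).biUnion
          (fun S => Finset.powersetCard m (Finset.univ \ S)) := by
    intro I hI
    rw [Finset.mem_filter] at hI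
    obtain ⟨hIP, hIc⟩ := hI
    have hJI : r ≤ (J \ I).card := by
      have := Finset.card_inter_add_card_sdiff J I
      omega
    obtain ⟨S, hS, hScard⟩ := Finset.exists_subset_card_eq hJI
    rw [Finset.mem_biUnion]
    refine ⟨S, ?_, ?_⟩
    · rw [Finset.mem_powersetCard]
      exact ⟨hS.trans (Finset.sdiff_subset), hScard⟩
    · rw [Finset.mem_powersetCard]
      refine ⟨fun i hi => ?_, (Finset.mem_powersetCard_univ.mp hIP)⟩
      rw [Finset.mem_sdiff]
      refine ⟨Finset.mem_univ _, fun hiS => ?_⟩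
      have := hS hiS
      rw [Finset.mem_sdiff] at this
      exact this.2 hi
  calc ((Finset.powersetCard m (Finset.univ : Finset (Fin n))).filter
        (fun I => (J ∩ I).card ≤ u)).card
      ≤ ((Finset.powersetCard r J).biUnion
          (fun S => Finset.powersetCard m (Finset.univ \ S))).card :=
        Finset.card_le_card hsub
    _ ≤ ∑ S ∈ Finset.powersetCard r J, (Finset.powersetCard m (Finset.univ \ S)).card :=
        Finset.card_biUnion_le
    _ = ∑ S ∈ Finset.powersetCard r J, Nat.choose (n - r) m := by
        apply Finset.sum_congr rfl
        intro S hS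
        rw [Finset.card_powersetCard, Finset.card_sdiff_of_subset (Finset.subset_univ S),
          Finset.card_univ, Fintype.card_fin, (Finset.mem_powersetCard.mp hS).2]
    _ = Nat.choose k r * Nat.choose (n - r) m := by
        rw [Finset.sum_const, smul_eq_mul, Finset.card_powersetCard, hk]


lemma pow_self_le_factorial (u : ℕ) : (u : ℝ) ^ u ≤ 3 ^ u * u.factorial := by
  induction u with
  | zero => simp
  | succ u ih =>
    rcases Nat.eq_zero_or_pos u with hu | hu
    · subst hu; norm_num
    have hu0 : (0:ℝ) < u := by exact_mod_cast hu
    have key : ((u:ℝ) + 1) ^ u ≤ 3 * (u:ℝ) ^ u := by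
      have h1 : (1 : ℝ) + 1 / u ≤ Real.exp (1 / u) := by
        have := Real.add_one_le_exp (1 / (u:ℝ))
        linarith
      have h2 : ((u:ℝ) + 1) ^ u = ((1 + 1/u) * u) ^ u := by
        congr 1
        field_simp
      rw [h2, mul_pow]
      have h3 : ((1:ℝ) + 1/u) ^ u ≤ Real.exp (1/u) ^ u := by
        apply pow_le_pow_left₀ (by positivity) h1
      have h4 : Real.exp (1/(u:ℝ)) ^ u = Real.exp 1 := by
        rw [← Real.exp_nat_mul]
        congr 1
        field_simp
      have h5 : Real.exp 1 ≤ 3 := by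
        have := Real.exp_one_lt_d9
        linarith
      have h6 : (0:ℝ) ≤ (u:ℝ) ^ u := by positivity
      calc ((1:ℝ) + 1/u) ^ u * (u:ℝ)^u ≤ Real.exp (1/(u:ℝ)) ^ u * (u:ℝ)^u := by
            apply mul_le_mul_of_nonneg_right h3 h6
        _ = Real.exp 1 * (u:ℝ)^u := by rw [h4]
        _ ≤ 3 * (u:ℝ)^u := mul_le_mul_of_nonneg_right h5 h6
    have hnn : (0:ℝ) ≤ (u:ℝ) + 1 := by positivity
    calc ((u+1 : ℕ) : ℝ) ^ (u+1) = ((u:ℝ)+1) * ((u:ℝ)+1) ^ u := by push_cast; ring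
      _ ≤ ((u:ℝ)+1) * (3 * (u:ℝ)^u) := by apply mul_le_mul_of_nonneg_left key hnn
      _ ≤ ((u:ℝ)+1) * (3 * (3^u * u.factorial)) := by
          apply mul_le_mul_of_nonneg_left (by apply mul_le_mul_of_nonneg_left ih (by norm_num)) hnn
      _ = 3 ^ (u+1) * ((u+1) * u.factorial) := by ring
      _ = 3 ^ (u+1) * (u+1).factorial := by rw [Nat.factorial_succ]; push_cast; ring

-- 31/32 ≤ 2 ^ (-1/22)
lemma base_bound : (31/32 : ℝ) ≤ (2 : ℝ) ^ (-(1/22) : ℝ) := by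
  have h22 : (2:ℝ) ≤ ((32/31 : ℝ)) ^ ((22:ℕ):ℝ) := by
    rw [Real.rpow_natCast, div_pow, le_div_iff₀ (by positivity)]
    norm_num
  have hpos : (0:ℝ) < 32/31 := by norm_num
  have h1 : (2:ℝ) ^ ((1:ℝ)/22) ≤ 32/31 := by
    have h := Real.rpow_le_rpow (by norm_num : (0:ℝ) ≤ 2) h22 (by norm_num : (0:ℝ) ≤ 1/22)
    rwa [← Real.rpow_mul (le_of_lt hpos), show ((22:ℕ):ℝ) * (1/22) = 1 by norm_num,
      Real.rpow_one] at h
  have h2 : (0:ℝ) < (2:ℝ) ^ ((1:ℝ)/22) := Real.rpow_pos_of_pos (by norm_num) _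
  have h3 := inv_anti₀ h2 h1
  rw [show (31/32 : ℝ) = (32/31 : ℝ)⁻¹ by norm_num]
  rw [show (-(1/22) : ℝ) = -((1:ℝ)/22) by norm_num, Real.rpow_neg (by norm_num : (0:ℝ) ≤ 2)]
  exact h3

lemma choose_mul_pow_bound {k u : ℕ} (h1 : 1 ≤ u) (h2 : 2048 * u < k) :
    (Nat.choose k u : ℝ) * (31/32 : ℝ) ^ (k - u) ≤ (2:ℝ) ^ (-(k:ℝ)/2048) := by
  have huk : u ≤ k := by omega
  have hu0 : (0:ℝ) < u := by exact_mod_cast h1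
  have hk0 : (0:ℝ) < k := by exact_mod_cast (show 0 < k by omega)
  have h2R : 2048 * (u:ℝ) ≤ (k:ℝ) := by exact_mod_cast h2.le
  have hfact : (0:ℝ) < u.factorial := by exact_mod_cast u.factorial_pos
  set v : ℝ := (k:ℝ)/(2048*u) with hv
  have hv1 : (1:ℝ) ≤ v := by
    rw [hv, le_div_iff₀ (by positivity)]
    linarith
  have step1 : (Nat.choose k u : ℝ) ≤ (k:ℝ)^u / u.factorial := Nat.choose_le_pow_div u k
  have step2 : (k:ℝ)^u / u.factorial ≤ 3^u * (k:ℝ)^u / (u:ℝ)^u := by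
    rw [div_le_div_iff₀ hfact (by positivity)]
    calc (k:ℝ)^u * (u:ℝ)^u ≤ (k:ℝ)^u * (3^u * u.factorial) :=
          mul_le_mul_of_nonneg_left (pow_self_le_factorial u) (by positivity)
      _ = 3^u * (k:ℝ)^u * u.factorial := by ring
  have step3 : (3:ℝ)^u * (k:ℝ)^u / (u:ℝ)^u = 6144^u * v^u := by
    rw [hv, div_pow, mul_pow, show (6144:ℝ)^u = 3^u * 2048^u by rw [← mul_pow]; norm_num]
    field_simp
  have step4 : v^u ≤ Real.exp ((k:ℝ)/2048) := by
    have hev : v ≤ Real.exp v := by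
      have := Real.add_one_le_exp v; linarith
    calc v^u ≤ (Real.exp v)^u := pow_le_pow_left₀ (by linarith) hev u
      _ = Real.exp ((u:ℕ) * v) := (Real.exp_nat_mul v u).symm
      _ = Real.exp ((k:ℝ)/2048) := by
          congr 1
          rw [hv]
          field_simp
  have step5 : Real.exp ((k:ℝ)/2048) ≤ (2:ℝ)^((k:ℝ)/1024) := by
    rw [Real.rpow_def_of_pos (by norm_num : (0:ℝ) < 2)]
    apply Real.exp_le_exp.mpr
    have hlog := Real.log_two_gt_d9
    nlinarith [hk0.le]
  have step6 : (6144:ℝ)^u ≤ (2:ℝ)^((13*u : ℕ):ℝ) := by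
    rw [Real.rpow_natCast, pow_mul]
    apply pow_le_pow_left₀ (by norm_num)
    norm_num
  have hA : (Nat.choose k u : ℝ) ≤ (2:ℝ)^((13*u : ℕ):ℝ) * (2:ℝ)^((k:ℝ)/1024) := by
    calc (Nat.choose k u : ℝ) ≤ (k:ℝ)^u / u.factorial := step1
      _ ≤ 3^u * (k:ℝ)^u / (u:ℝ)^u := step2
      _ = 6144^u * v^u := step3
      _ ≤ (2:ℝ)^((13*u : ℕ):ℝ) * (2:ℝ)^((k:ℝ)/1024) := by
          apply mul_le_mul (le_trans step6 le_rfl) (step4.trans step5) (by positivity)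
            (by positivity)
  have hB : ((31:ℝ)/32) ^ (k - u) ≤ (2:ℝ) ^ (-(((k:ℝ) - u))/22) := by
    have hp := pow_le_pow_left₀ (by norm_num : (0:ℝ) ≤ 31/32) base_bound (k-u)
    have : ((2:ℝ) ^ (-(1/22) : ℝ)) ^ (k-u : ℕ) = (2:ℝ) ^ (-(((k:ℝ) - u))/22) := by
      rw [← Real.rpow_natCast ((2:ℝ) ^ (-(1/22) : ℝ)) (k-u), ← Real.rpow_mul (by norm_num)]
      congr 1
      rw [Nat.cast_sub huk]
      ring
    rwa [this] at hp
  have hnn : (0:ℝ) ≤ ((31:ℝ)/32) ^ (k - u) := by positivity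
  calc (Nat.choose k u : ℝ) * (31/32 : ℝ) ^ (k - u)
      ≤ ((2:ℝ)^((13*u : ℕ):ℝ) * (2:ℝ)^((k:ℝ)/1024)) * (2:ℝ) ^ (-(((k:ℝ) - u))/22) := by
        apply mul_le_mul hA hB hnn (by positivity)
    _ = (2:ℝ)^(((13*u : ℕ):ℝ) + (k:ℝ)/1024 + (-(((k:ℝ) - u))/22)) := by
        rw [← Real.rpow_add (by norm_num), ← Real.rpow_add (by norm_num)]
    _ ≤ (2:ℝ) ^ (-(k:ℝ)/2048) := by
        apply Real.rpow_le_rpow_of_exponent_le (by norm_num)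
        push_cast
        linarith

lemma part2 {s n m k : ℕ} (hs : 3 ≤ s) (hn : 1 ≤ n) (hm1 : (n : ℝ) / 32 ≤ m) (hm2 : m ≤ n)
    (J : Finset (Fin n)) (hkJ : J.card = k) :
    (∑ I ∈ Finset.powersetCard m (Finset.univ : Finset (Fin n)),
        (-1 / ((s : ℝ) - 1)) ^ (J ∩ I).card) / (n.choose m)
      ≤ 2 * 2 ^ (-(k : ℝ) / 2 ^ 11) := by
  have hkn : k ≤ n := by
    rw [← hkJ]
    exact le_trans (Finset.card_le_univ J) (by simp)
  have hm1' : 1 ≤ m := by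
    by_contra h
    push_neg at h
    interval_cases m
    have : (1:ℝ) ≤ n := by exact_mod_cast hn
    norm_num at hm1
    linarith
  have hn32 : n ≤ 32 * m := by
    have h1 : ((n:ℝ)) ≤ 32 * m := by linarith [hm1]
    exact_mod_cast h1
  have hN : 0 < n.choose m := Nat.choose_pos hm2
  have hN0 : (0:ℝ) < (n.choose m : ℝ) := by exact_mod_cast hN
  set P := Finset.powersetCard m (Finset.univ : Finset (Fin n)) with hP
  have hPcard : P.card = n.choose m := by
    rw [hP, Finset.card_powersetCard, Finset.card_univ, Fintype.card_fin]
  have hterm : ∀ c : ℕ, (-1 / ((s : ℝ) - 1)) ^ c ≤ (1/2 : ℝ) ^ c := by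
    intro c
    have hs2 : (2:ℝ) ≤ (s:ℝ) - 1 := by
      have : (3:ℝ) ≤ s := by exact_mod_cast hs
      linarith
    have habs : |(-1 / ((s : ℝ) - 1))| ≤ 1/2 := by
      rw [abs_div, abs_neg, abs_one, abs_of_nonneg (by linarith)]
      rw [div_le_div_iff₀ (by linarith) (by norm_num)]
      linarith
    calc (-1 / ((s : ℝ) - 1)) ^ c ≤ |(-1 / ((s : ℝ) - 1)) ^ c| := le_abs_self _
      _ = |(-1 / ((s : ℝ) - 1))| ^ c := abs_pow _ _
      _ ≤ (1/2 : ℝ) ^ c := pow_le_pow_left₀ (abs_nonneg _) habs c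
  have hmain : ∑ I ∈ P, (1/2 : ℝ) ^ (J ∩ I).card
      ≤ 2 * (2:ℝ) ^ (-(k:ℝ)/2048) * (n.choose m : ℝ) := by
    rcases le_or_gt k 2048 with hk | hk
    · have hb : ∑ I ∈ P, (1/2 : ℝ) ^ (J ∩ I).card ≤ (n.choose m : ℝ) := by
        calc ∑ I ∈ P, (1/2 : ℝ) ^ (J ∩ I).card ≤ ∑ _I ∈ P, (1:ℝ) :=
              Finset.sum_le_sum (fun I _ => pow_le_one₀ (by norm_num) (by norm_num))
          _ = (n.choose m : ℝ) := by rw [Finset.sum_const, hPcard]; simp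
      have h1 : (1:ℝ) ≤ 2 * (2:ℝ) ^ (-(k:ℝ)/2048) := by
        have : (2:ℝ) ^ (-1 : ℝ) ≤ (2:ℝ) ^ (-(k:ℝ)/2048) := by
          apply Real.rpow_le_rpow_of_exponent_le (by norm_num)
          rw [neg_div, neg_le_neg_iff]
          rw [div_le_one (by norm_num)]
          exact_mod_cast hk
        rw [Real.rpow_neg_one] at this
        linarith
      nlinarith
    · set t := (k + 2047) / 2048 with hT
      set u := t - 1 with hU
      have hdm := Nat.div_add_mod (k + 2047) 2048
      have hmod := Nat.mod_lt (k + 2047) (show 0 < 2048 by norm_num)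
      have h1 : k ≤ 2048 * t := by omega
      have h2 : 2048 * u < k := by omega
      have h3 : 1 ≤ u := by omega
      have ht : t = u + 1 := by omega
      have huk : u ≤ k := by omega
      rw [← Finset.sum_filter_add_sum_filter_not P (fun I => (J ∩ I).card ≤ u)]
      have hsmall : ∑ I ∈ P.filter (fun I => (J ∩ I).card ≤ u), (1/2 : ℝ) ^ (J ∩ I).card
          ≤ (2:ℝ) ^ (-(k:ℝ)/2048) * (n.choose m : ℝ) := by
        have hc1 : ∑ I ∈ P.filter (fun I => (J ∩ I).card ≤ u), (1/2 : ℝ) ^ (J ∩ I).card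
            ≤ ((P.filter (fun I => (J ∩ I).card ≤ u)).card : ℝ) := by
          calc ∑ I ∈ P.filter (fun I => (J ∩ I).card ≤ u), (1/2 : ℝ) ^ (J ∩ I).card
              ≤ ∑ _I ∈ P.filter (fun I => (J ∩ I).card ≤ u), (1:ℝ) :=
                Finset.sum_le_sum (fun I _ => pow_le_one₀ (by norm_num) (by norm_num))
            _ = _ := by rw [Finset.sum_const]; simp
        have hc2 : ((P.filter (fun I => (J ∩ I).card ≤ u)).card : ℝ)
            ≤ (Nat.choose k (k - u) : ℝ) * (Nat.choose (n - (k - u)) m : ℝ) := by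
          exact_mod_cast Nat.cast_le.mpr (cover_count J k u m hkJ huk)
        have hc3 : (Nat.choose (n - (k - u)) m : ℝ)
            ≤ (31/32 : ℝ) ^ (k - u) * (n.choose m : ℝ) := by
          have := choose_ratio hn32 hm1' (k - u)
          have hcast : (32:ℝ) ^ (k-u) * (Nat.choose (n - (k - u)) m : ℝ)
              ≤ (31:ℝ) ^ (k-u) * (n.choose m : ℝ) := by exact_mod_cast this
          rw [div_pow]
          rw [div_mul_eq_mul_div, le_div_iff₀ (by positivity)]
          linarith [hcast]
        have hc4 : (Nat.choose k (k - u) : ℝ) = (Nat.choose k u : ℝ) := by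
          rw [Nat.choose_symm huk]
        calc ∑ I ∈ P.filter (fun I => (J ∩ I).card ≤ u), (1/2 : ℝ) ^ (J ∩ I).card
            ≤ (Nat.choose k (k - u) : ℝ) * (Nat.choose (n - (k - u)) m : ℝ) :=
              hc1.trans hc2
          _ ≤ (Nat.choose k u : ℝ) * ((31/32 : ℝ) ^ (k - u) * (n.choose m : ℝ)) := by
              rw [hc4]
              exact mul_le_mul_of_nonneg_left hc3 (Nat.cast_nonneg _)
          _ = ((Nat.choose k u : ℝ) * (31/32 : ℝ) ^ (k - u)) * (n.choose m : ℝ) := by ring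
          _ ≤ (2:ℝ) ^ (-(k:ℝ)/2048) * (n.choose m : ℝ) :=
              mul_le_mul_of_nonneg_right (choose_mul_pow_bound h3 h2) (le_of_lt hN0)
      have hbig : ∑ I ∈ P.filter (fun I => ¬ (J ∩ I).card ≤ u), (1/2 : ℝ) ^ (J ∩ I).card
          ≤ (2:ℝ) ^ (-(k:ℝ)/2048) * (n.choose m : ℝ) := by
        have hhalf : (1/2:ℝ) ^ t ≤ (2:ℝ) ^ (-(k:ℝ)/2048) := by
          have heq : (1/2:ℝ) ^ t = (2:ℝ) ^ (-(t:ℝ)) := by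
            rw [Real.rpow_neg (by norm_num), Real.rpow_natCast]
            rw [one_div, inv_pow]
          rw [heq]
          apply Real.rpow_le_rpow_of_exponent_le (by norm_num)
          rw [neg_div, neg_le_neg_iff, div_le_iff₀ (by norm_num : (0:ℝ) < 2048)]
          have : (k:ℝ) ≤ 2048 * t := by exact_mod_cast h1
          linarith
        calc ∑ I ∈ P.filter (fun I => ¬ (J ∩ I).card ≤ u), (1/2 : ℝ) ^ (J ∩ I).card
            ≤ ∑ _I ∈ P.filter (fun I => ¬ (J ∩ I).card ≤ u), (1/2:ℝ) ^ t := by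
              apply Finset.sum_le_sum
              intro I hI
              have hc := Finset.mem_filter.mp hI |>.2
              push_neg at hc
              apply pow_le_pow_of_le_one (by norm_num) (by norm_num)
              omega
          _ = ((P.filter (fun I => ¬ (J ∩ I).card ≤ u)).card : ℝ) * (1/2:ℝ)^t := by
              rw [Finset.sum_const]; simp [nsmul_eq_mul]
          _ ≤ (n.choose m : ℝ) * (1/2:ℝ)^t := by
              apply mul_le_mul_of_nonneg_right _ (by positivity)
              have := Finset.card_filter_le P (fun I => ¬ (J ∩ I).card ≤ u)
              rw [hPcard] at this
              exact_mod_cast this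
          _ ≤ (n.choose m : ℝ) * (2:ℝ) ^ (-(k:ℝ)/2048) :=
              mul_le_mul_of_nonneg_left hhalf (le_of_lt hN0)
          _ = (2:ℝ) ^ (-(k:ℝ)/2048) * (n.choose m : ℝ) := by ring
      linarith
  have hnum : (∑ I ∈ P, (-1 / ((s : ℝ) - 1)) ^ (J ∩ I).card)
      ≤ ∑ I ∈ P, (1/2 : ℝ) ^ (J ∩ I).card :=
    Finset.sum_le_sum (fun I _ => hterm _)
  have hexp : -(k : ℝ) / 2 ^ 11 = -(k:ℝ)/2048 := by norm_num
  rw [hexp, div_le_iff₀ hN0]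
  calc (∑ I ∈ P, (-1 / ((s : ℝ) - 1)) ^ (J ∩ I).card)
      ≤ ∑ I ∈ P, (1/2 : ℝ) ^ (J ∩ I).card := hnum
    _ ≤ 2 * (2:ℝ) ^ (-(k:ℝ)/2048) * (n.choose m : ℝ) := hmain


theorem stmt16 {s n m : ℕ} (hs : 3 ≤ s) [NeZero s] (hn : 1 ≤ n)
    (hm1 : (n : ℝ) / 32 ≤ m) (hm2 : m ≤ n)
    (ω : ℂ) (hω : IsPrimitiveRoot ω s)
    (α : Fin n → ZMod s) (J : Finset (Fin n))
    (hJ : J = Finset.univ.filter (fun i => α i ≠ 0))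
    (k : ℕ) (hk : k = hammingNorm α) :
    (∑ y ∈ Finset.univ.filter (fun y : Fin n → ZMod s => hammingNorm y = m), chi ω α y)
        / ((Finset.univ.filter (fun y : Fin n → ZMod s => hammingNorm y = m)).card : ℂ)
      = (((∑ I ∈ Finset.powersetCard m (Finset.univ : Finset (Fin n)),
            (-1 / ((s : ℝ) - 1)) ^ (J ∩ I).card) / (n.choose m) : ℝ) : ℂ)
    ∧ (∑ I ∈ Finset.powersetCard m (Finset.univ : Finset (Fin n)),
          (-1 / ((s : ℝ) - 1)) ^ (J ∩ I).card) / (n.choose m)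
        ≤ 2 * 2 ^ (-(k : ℝ) / 2 ^ 11) := by
  have hkJ : J.card = k := by rw [hJ, hk]; rfl
  exact ⟨part1 hs m ω hω α J hJ, part2 hs hn hm1 hm2 J hkJ⟩
end

section
/- Let G be an additive abelian group, let S₁,…,Sₙ be finite nonempty sets, let L₁,…,Lₙ be positive integers, and set Tᵢ = Sᵢ × {1,…,Lᵢ}. Given f : S₁ × ⋯ × Sₙ → G, define f_λ : T₁ × ⋯ × Tₙ → G by f_λ((x₁,b₁),…,(xₙ,bₙ)) = f(x₁,…,xₙ). Then for every d ∈ ℕ, the minimum over all junta-degree-≤d functions h : T₁ × ⋯ × Tₙ → G of Pr_{z uniform}[f_λ(z) ≠ h(z)] equals the minimum over all junta-degree-≤d functions h' : S₁ × ⋯ × Sₙ → G of Pr_{x uniform}[f(x) ≠ h'(x)]. -/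
open scoped Classical

lemma junta_zero {n : ℕ} {D : Fin n → Type*} {G : Type*} [AddCommGroup G] (d : ℕ) :
    JuntaDegLE d (fun _ : ∀ i, D i => (0 : G)) :=
  ⟨0, Fin.elim0, Fin.elim0, fun j => j.elim0, fun j => j.elim0, fun _ => by simp⟩

lemma junta_comp {n : ℕ} {D E : Fin n → Type*} {G : Type*} [AddCommGroup G] {d : ℕ}
    {h : (∀ i, D i) → G} (hj : JuntaDegLE d h) (p : ∀ i, E i → D i) :
    JuntaDegLE d (fun z : ∀ i, E i => h (fun i => p i (z i))) := by
  obtain ⟨t, Ds, fs, h1, h2, h3⟩ := hj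
  refine ⟨t, Ds, fun j z => fs j (fun i => p i (z i)), h1, ?_, fun z => h3 _⟩
  intro j x y hxy
  exact h2 j _ _ (fun i hi => by rw [hxy i hi])

theorem stmt17 {n : ℕ} {G : Type*} [AddCommGroup G]
    (S : Fin n → Type*) [∀ i, Fintype (S i)] [∀ i, Nonempty (S i)]
    (L : Fin n → ℕ) (hL : ∀ i, 1 ≤ L i) (d : ℕ)
    (f : (∀ i, S i) → G) :
    sInf {x : ℝ | ∃ h : (∀ i, S i × Fin (L i)) → G, JuntaDegLE d h ∧
        x = ((Finset.univ.filter (fun z : ∀ i, S i × Fin (L i) =>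
              f (fun i => (z i).1) ≠ h z)).card : ℝ)
            / Fintype.card (∀ i, S i × Fin (L i))}
      = sInf {x : ℝ | ∃ h' : (∀ i, S i) → G, JuntaDegLE d h' ∧
          x = ((Finset.univ.filter (fun y : ∀ i, S i => f y ≠ h' y)).card : ℝ)
            / Fintype.card (∀ i, S i)} := by
  classical
  haveI hBne : ∀ i, Nonempty (Fin (L i)) := fun i => ⟨⟨0, hL i⟩⟩
  set A := {x : ℝ | ∃ h : (∀ i, S i × Fin (L i)) → G, JuntaDegLE d h ∧
        x = ((Finset.univ.filter (fun z : ∀ i, S i × Fin (L i) =>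
              f (fun i => (z i).1) ≠ h z)).card : ℝ)
            / Fintype.card (∀ i, S i × Fin (L i))} with hA
  set B := {x : ℝ | ∃ h' : (∀ i, S i) → G, JuntaDegLE d h' ∧
          x = ((Finset.univ.filter (fun y : ∀ i, S i => f y ≠ h' y)).card : ℝ)
            / Fintype.card (∀ i, S i)} with hB
  let e : (∀ i, S i × Fin (L i)) ≃ ((∀ i, S i) × (∀ i, Fin (L i))) :=
    { toFun := fun z => (fun i => (z i).1, fun i => (z i).2)
      invFun := fun w i => (w.1 i, w.2 i)
      left_inv := fun z => rfl
      right_inv := fun w => rfl }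
  have hS : (0:ℝ) < Fintype.card (∀ i, S i) := by
    exact_mod_cast Fintype.card_pos
  have hBB : (0:ℝ) < Fintype.card (∀ i, Fin (L i)) := by
    exact_mod_cast Fintype.card_pos
  have hcard : (Fintype.card (∀ i, S i × Fin (L i)) : ℝ)
      = (Fintype.card (∀ i, S i) : ℝ) * Fintype.card (∀ i, Fin (L i)) := by
    rw [Fintype.card_congr e, Fintype.card_prod]
    push_cast
    ring
  -- counting lemma
  have hcnt : ∀ h : (∀ i, S i × Fin (L i)) → G,
      (Finset.univ.filter (fun z : ∀ i, S i × Fin (L i) =>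
          f (fun i => (z i).1) ≠ h z)).card
      = ∑ b : ∀ i, Fin (L i),
          (Finset.univ.filter (fun x : ∀ i, S i =>
            f x ≠ h (fun i => (x i, b i)))).card := by
    intro h
    simp only [Finset.card_filter]
    rw [← Equiv.sum_comp e.symm
      (fun z : ∀ i, S i × Fin (L i) => if f (fun i => (z i).1) ≠ h z then 1 else 0)]
    rw [Fintype.sum_prod_type]
    exact Finset.sum_comm
  have hbdA : BddBelow A := by
    refine ⟨0, fun x hx => ?_⟩
    obtain ⟨h, -, rfl⟩ := hx
    positivity
  have hbdB : BddBelow B := by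
    refine ⟨0, fun x hx => ?_⟩
    obtain ⟨h, -, rfl⟩ := hx
    positivity
  have hAne : A.Nonempty := ⟨_, (fun _ => 0), junta_zero d, rfl⟩
  have hBne' : B.Nonempty := ⟨_, (fun _ => 0), junta_zero d, rfl⟩
  apply le_antisymm
  · apply le_csInf hBne'
    rintro x ⟨h', hj, rfl⟩
    apply csInf_le hbdA
    refine ⟨fun z => h' (fun i => (z i).1), junta_comp hj (fun i => Prod.fst), ?_⟩
    rw [hcnt, hcard]
    have : ∀ b : ∀ i, Fin (L i),
        (Finset.univ.filter (fun x : ∀ i, S i =>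
          f x ≠ (fun z : ∀ i, S i × Fin (L i) => h' (fun i => (z i).1))
            (fun i => (x i, b i)))).card
        = (Finset.univ.filter (fun y : ∀ i, S i => f y ≠ h' y)).card := by
      intro b; rfl
    rw [Finset.sum_congr rfl (fun b _ => this b), Finset.sum_const, Finset.card_univ,
      smul_eq_mul]
    push_cast
    rw [mul_comm ((Fintype.card (∀ i, S i) : ℝ)), mul_div_mul_left _ _ hBB.ne']
  · apply le_csInf hAne
    rintro x ⟨h, hj, rfl⟩
    obtain ⟨b, -, hbmin⟩ := Finset.exists_min_image Finset.univ
      (fun b : ∀ i, Fin (L i) => (Finset.univ.filter (fun x : ∀ i, S i =>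
        f x ≠ h (fun i => (x i, b i)))).card) ⟨Classical.arbitrary _, Finset.mem_univ _⟩
    refine csInf_le_of_le hbdB
      ⟨fun x => h (fun i => (x i, b i)), junta_comp hj (fun i s => (s, b i)), rfl⟩ ?_
    rw [hcnt, hcard]
    have hsum : (Fintype.card (∀ i, Fin (L i))) *
        (Finset.univ.filter (fun x : ∀ i, S i => f x ≠ h (fun i => (x i, b i)))).card
        ≤ ∑ b' : ∀ i, Fin (L i),
            (Finset.univ.filter (fun x : ∀ i, S i =>
              f x ≠ h (fun i => (x i, b' i)))).card := by
      rw [← Finset.card_univ, ← smul_eq_mul]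
      exact Finset.card_nsmul_le_sum _ _ _ (fun b' _ => hbmin b' (Finset.mem_univ b'))
    have hsum' : (Fintype.card (∀ i, Fin (L i)) : ℝ) *
        ((Finset.univ.filter (fun x : ∀ i, S i => f x ≠ h (fun i => (x i, b i)))).card : ℝ)
        ≤ (∑ b' : ∀ i, Fin (L i),
            (Finset.univ.filter (fun x : ∀ i, S i =>
              f x ≠ h (fun i => (x i, b' i)))).card : ℕ) := by
      exact_mod_cast hsum
    rw [div_le_div_iff₀ hS (by positivity)]
    push_cast at hsum' ⊢
    nlinarith
end

section
/- Let F be a field containing n+2 pairwise distinct elements 0, 1, a₁, …, aₙ, and set Sᵢ = {0, 1, aᵢ} ⊆ F for i ∈ {1,…,n}. Let ℓ ≥ 1, let D be a probability mass function on a finite set of ℓ-tuples M = (x^(1),…,x^(ℓ)) of points of S₁ × ⋯ × Sₙ, let P : F^ℓ → Prop be a predicate, and let c > 0 be a real number. Suppose: (i) for every M in the support of D and every polynomial g ∈ F[x₁,…,xₙ] of total degree at most 1, P(g(x^(1)),…,g(x^(ℓ))) holds; and (ii) for every i ∈ {1,…,n}, the D-probability of the set of M such that P(x^(1)_i(x^(1)_i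 − 1), …, x^(ℓ)_i(x^(ℓ)_i − 1)) fails is at least c. Then c·n ≤ 3^ℓ. -/
open scoped Classical

theorem stmt18 {F : Type*} [Field F] {n ℓ : ℕ} (hn : 1 ≤ n) (hℓ : 1 ≤ ℓ)
    (a : Fin n → F) (ha0 : ∀ i, a i ≠ 0) (ha1 : ∀ i, a i ≠ 1)
    (haInj : Function.Injective a)
    (D : Finset (Fin ℓ → Fin n → F)) (wt : (Fin ℓ → Fin n → F) → ℝ)
    (hw0 : ∀ M ∈ D, 0 ≤ wt M) (hw1 : ∑ M ∈ D, wt M = 1)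
    (hrows : ∀ M ∈ D, ∀ (k : Fin ℓ) (i : Fin n), M k i = 0 ∨ M k i = 1 ∨ M k i = a i)
    (P : (Fin ℓ → F) → Prop) (c : ℝ) (hc : 0 < c)
    (hsound : ∀ M ∈ D, ∀ g : MvPolynomial (Fin n) F, g.totalDegree ≤ 1 →
      P (fun k => MvPolynomial.eval (M k) g))
    (hreject : ∀ i : Fin n,
      c ≤ ∑ M ∈ D.filter (fun M => ¬ P (fun k => M k i * (M k i - 1))), wt M) :
    c * n ≤ 3 ^ ℓ := by
  classical
  set bad : (Fin ℓ → Fin n → F) → Finset (Fin n) :=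
    fun M => Finset.univ.filter (fun i => ¬ P (fun k => M k i * (M k i - 1))) with hbad
  have key : ∀ M ∈ D, (bad M).card ≤ 3 ^ ℓ := by
    intro M hM
    set t : Fin n → Fin ℓ → Fin 3 :=
      fun i k => if M k i = 0 then 0 else if M k i = 1 then 1 else 2 with ht
    have hinj : Set.InjOn t ↑(bad M) := by
      intro i hi j hj hij
      by_contra hne
      have haij : a i - a j ≠ 0 := sub_ne_zero.mpr (fun h => hne (haInj h))
      set lam : F := a i * (a i - 1) / (a i - a j) with hlam
      set g : MvPolynomial (Fin n) F :=
        MvPolynomial.C lam * (MvPolynomial.X i - MvPolynomial.X j) with hg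
      have hdeg : g.totalDegree ≤ 1 := by
        have h1 : (MvPolynomial.X i - MvPolynomial.X j :
            MvPolynomial (Fin n) F).totalDegree ≤ 1 := by
          refine (MvPolynomial.totalDegree_sub _ _).trans ?_
          simp [MvPolynomial.totalDegree_X]
        have h2 := MvPolynomial.totalDegree_mul (MvPolynomial.C lam)
          (MvPolynomial.X i - MvPolynomial.X j : MvPolynomial (Fin n) F)
        rw [MvPolynomial.totalDegree_C, zero_add] at h2
        exact h2.trans h1
      have heval : ∀ k, MvPolynomial.eval (M k) g = M k i * (M k i - 1) := by
        intro k
        have hk : t i k = t j k := congrFun hij k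
        have hevg : MvPolynomial.eval (M k) g = lam * (M k i - M k j) := by
          simp [hg]
        rcases hrows M hM k i with h0 | h1 | ha
        · have : M k j = 0 := by
            simp only [ht, h0, if_pos rfl] at hk
            by_contra h
            rw [if_neg h] at hk
            split_ifs at hk <;> simp_all
          rw [hevg, h0, this]; ring
        · have hne01 : (M k i) ≠ 0 := by rw [h1]; exact one_ne_zero
          have : M k j = 1 := by
            simp only [ht, if_neg hne01, h1, if_pos rfl] at hk
            by_contra h
            split_ifs at hk <;> simp_all
          rw [hevg, h1, this]; ring
        · have hne0 : (M k i) ≠ 0 := by rw [ha]; exact ha0 i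
          have hne1 : (M k i) ≠ 1 := by rw [ha]; exact ha1 i
          simp only [ht, if_neg hne0, if_neg hne1] at hk
          have hj0 : M k j ≠ 0 := by
            intro h; rw [if_pos h] at hk; exact absurd hk (by decide)
          have hj1 : M k j ≠ 1 := by
            intro h; rw [if_neg hj0, if_pos h] at hk; exact absurd hk (by decide)
          have hja : M k j = a j := by
            rcases hrows M hM k j with h | h | h
            · exact absurd h hj0
            · exact absurd h hj1
            · exact h
          rw [hevg, ha, hja, hlam, div_mul_cancel₀ _ haij]
      have hP : P (fun k => M k i * (M k i - 1)) := by
        have := hsound M hM g hdeg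
        rwa [show (fun k => MvPolynomial.eval (M k) g)
            = fun k => M k i * (M k i - 1) from funext heval] at this
      simp only [hbad, Finset.mem_coe, Finset.mem_filter] at hi
      exact hi.2 hP
    calc (bad M).card ≤ (Finset.univ : Finset (Fin ℓ → Fin 3)).card :=
          Finset.card_le_card_of_injOn t (fun x _ => Finset.mem_univ _) hinj
    _ = 3 ^ ℓ := by simp [Fintype.card_fun]
  have step : c * n ≤ ∑ M ∈ D, ((bad M).card : ℝ) * wt M := by
    calc c * n = ∑ _i : Fin n, c := by
          simp [Finset.sum_const, mul_comm]
    _ ≤ ∑ i : Fin n, ∑ M ∈ D.filter (fun M => ¬ P (fun k => M k i * (M k i - 1))), wt M :=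
          Finset.sum_le_sum (fun i _ => hreject i)
    _ = ∑ i : Fin n, ∑ M ∈ D, if ¬ P (fun k => M k i * (M k i - 1)) then wt M else 0 := by
          refine Finset.sum_congr rfl (fun i _ => ?_)
          rw [Finset.sum_filter]
    _ = ∑ M ∈ D, ∑ i : Fin n, if ¬ P (fun k => M k i * (M k i - 1)) then wt M else 0 :=
          Finset.sum_comm
    _ = ∑ M ∈ D, ((bad M).card : ℝ) * wt M := by
          refine Finset.sum_congr rfl (fun M _ => ?_)
          rw [Finset.sum_ite, Finset.sum_const, Finset.sum_const]
          simp [hbad, mul_comm, nsmul_eq_mul]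
  calc c * n ≤ ∑ M ∈ D, ((bad M).card : ℝ) * wt M := step
  _ ≤ ∑ M ∈ D, (3 ^ ℓ : ℝ) * wt M := by
      refine Finset.sum_le_sum (fun M hM => ?_)
      refine mul_le_mul_of_nonneg_right ?_ (hw0 M hM)
      exact_mod_cast key M hM
  _ = 3 ^ ℓ := by rw [← Finset.mul_sum, hw1, mul_one]
end

section
/- Let F be a field containing n+2 pairwise distinct elements 0, 1, a₁, …, aₙ (n ≥ 1), and set Sᵢ = {0, 1, aᵢ} ⊆ F. Fix i ∈ {1,…,n} and let f : S₁ × ⋯ × Sₙ → F be the function f(x) = xᵢ(xᵢ − 1). Then for every polynomial g ∈ F[x₁,…,xₙ] of total degree at most 1, the number of points x ∈ S₁ × ⋯ × Sₙ with f(x) ≠ g(x) is at least 3^{n−1}; that is, f is 1/3-far from the family of degree-1 functions on S₁ × ⋯ × Sₙ. -/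
open Finset

lemma affine_eval {F : Type*} [Field F] {n : ℕ} (i : Fin n)
    (g : MvPolynomial (Fin n) F) (hg : g.totalDegree ≤ 1) (x : Fin n → F) (t : F) :
    MvPolynomial.eval (Function.update x i t) g
      = MvPolynomial.eval (Function.update x i 0) g
        + (MvPolynomial.eval (Function.update x i 1) g
            - MvPolynomial.eval (Function.update x i 0) g) * t := by
  classical
  rw [MvPolynomial.eval_eq', MvPolynomial.eval_eq', MvPolynomial.eval_eq',
      ← Finset.sum_sub_distrib, Finset.sum_mul, ← Finset.sum_add_distrib]
  refine Finset.sum_congr rfl fun m hm => ?_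
  have hsum : ∑ j, m j ≤ 1 := by
    have h1 := MvPolynomial.le_totalDegree hm
    have h2 : (m.sum fun _ e => e) = ∑ j, m j := by
      rw [Finsupp.sum_fintype]; intro j; rfl
    rw [← h2]; exact le_trans h1 hg
  by_cases hmi : m i = 0
  · have hQ : ∀ s : F, ∏ j, Function.update x i s j ^ m j
        = ∏ j, Function.update x i 0 j ^ m j := by
      intro s
      refine Finset.prod_congr rfl fun j _ => ?_
      by_cases hj : j = i
      · subst hj; simp [Function.update_self, hmi]
      · simp [Function.update_of_ne hj]
    rw [hQ t, hQ 1]; ring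
  · have hmile : m i ≤ ∑ j, m j := Finset.single_le_sum (fun _ _ => Nat.zero_le _) (Finset.mem_univ i)
    have hmi1 : m i = 1 := by omega
    have hmj : ∀ j, j ≠ i → m j = 0 := by
      intro j hj
      have hsplit : m i + ∑ k ∈ Finset.univ.erase i, m k = ∑ k, m k :=
        Finset.add_sum_erase _ _ (Finset.mem_univ i)
      have hz : ∑ k ∈ Finset.univ.erase i, m k = 0 := by omega
      have := Finset.sum_eq_zero_iff.mp hz j (Finset.mem_erase.mpr ⟨hj, Finset.mem_univ j⟩)
      exact this
    have hQ : ∀ s : F, ∏ j, Function.update x i s j ^ m j = s := by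
      intro s
      rw [Finset.prod_eq_single i]
      · simp [Function.update_self, hmi1]
      · intro j _ hj; simp [hmj j hj]
      · intro h; exact absurd (Finset.mem_univ i) h
    rw [hQ t, hQ 0, hQ 1]; ring

theorem stmt19 {F : Type*} [Field F] [DecidableEq F] {n : ℕ} (hn : 1 ≤ n)
    (a : Fin n → F) (ha0 : ∀ j, a j ≠ 0) (ha1 : ∀ j, a j ≠ 1)
    (haInj : Function.Injective a) (i : Fin n)
    (g : MvPolynomial (Fin n) F) (hg : g.totalDegree ≤ 1) :
    3 ^ (n - 1) ≤
      ((Fintype.piFinset (fun j => ({0, 1, a j} : Finset F))).filter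
        (fun x => x i * (x i - 1) ≠ MvPolynomial.eval x g)).card := by
  classical
  set A : Finset (Fin n → F) :=
    Fintype.piFinset (fun j => if j = i then ({0} : Finset F) else {0, 1, a j}) with hA
  have hcardA : A.card = 3 ^ (n - 1) := by
    rw [hA, Fintype.card_piFinset]
    have : ∀ j : Fin n,
        (if j = i then ({0} : Finset F) else {0, 1, a j}).card = if j = i then 1 else 3 := by
      intro j
      by_cases hj : j = i
      · simp [hj]
      · have c3 : ({0, 1, a j} : Finset F).card = 3 := by
          rw [Finset.card_insert_of_notMem, Finset.card_insert_of_notMem,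
            Finset.card_singleton]
          · simp [Ne.symm (ha1 j)]
          · simp [Ne.symm (ha0 j)]
      -- handle the pieces
        simp [hj, c3]
    rw [Finset.prod_congr rfl fun j _ => this j]
    rw [← Finset.prod_erase_mul _ _ (Finset.mem_univ i)]
    rw [if_pos rfl, mul_one]
    rw [Finset.prod_congr rfl (fun j hj => if_neg (Finset.mem_erase.mp hj).1)]
    rw [Finset.prod_const, Finset.card_erase_of_mem (Finset.mem_univ i),
      Finset.card_univ, Fintype.card_fin]
  rw [← hcardA]
  set t : (Fin n → F) → F := fun y =>
    if MvPolynomial.eval (Function.update y i 0) g ≠ 0 then 0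
    else if MvPolynomial.eval (Function.update y i 1) g ≠ 0 then 1
    else a i with ht
  apply Finset.card_le_card_of_injOn (fun y => Function.update y i (t y))
  · intro y hy
    have hy' := Fintype.mem_piFinset.mp hy
    have hyi : y i = 0 := by
      have := hy' i; simpa using this
    have hmem : ∀ j, Function.update y i (t y) j ∈ ({0, 1, a j} : Finset F) := by
      intro j
      by_cases hj : j = i
      · rw [hj, Function.update_self]
        simp only [ht]
        split_ifs <;> simp
      · rw [Function.update_of_ne hj]
        have := hy' j
        simpa [if_neg hj] using this
    rw [Finset.mem_coe, Finset.mem_filter]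
    beta_reduce
    refine ⟨Fintype.mem_piFinset.mpr hmem, ?_⟩
    rw [Function.update_self]
    by_cases h0 : MvPolynomial.eval (Function.update y i 0) g ≠ 0
    · have htv : t y = 0 := by simp [ht, h0]
      rw [htv]
      simpa using Ne.symm h0
    · push_neg at h0
      by_cases h1 : MvPolynomial.eval (Function.update y i 1) g ≠ 0
      · have htv : t y = 1 := by simp [ht, h0, h1]
        rw [htv]
        simpa using Ne.symm h1
      · push_neg at h1
        have htv : t y = a i := by simp [ht, h0, h1]
        rw [htv]
        have heval : MvPolynomial.eval (Function.update y i (a i)) g = 0 := by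
          rw [affine_eval i g hg y (a i), h0, h1]; ring
        rw [heval]
        intro hcon
        rcases mul_eq_zero.mp hcon with h | h
        · exact ha0 i h
        · exact ha1 i (by rwa [sub_eq_zero] at h)
  · intro y hy y' hy' heq
    have hyi : y i = 0 := by
      have := Fintype.mem_piFinset.mp hy i; simpa using this
    have hyi' : y' i = 0 := by
      have := Fintype.mem_piFinset.mp hy' i; simpa using this
    funext j
    by_cases hj : j = i
    · subst hj; rw [hyi, hyi']
    · have := congrFun heq j
      simpa [Function.update_of_ne hj] using this
end
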